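/- arXiv:2008.07367 — 8 statements merged into one kernel-verified Lean document; each statement's English description precedes it below -/
import Mathlib

section
/- For integers s,t ≥ 2 and n ≥ s+t-2, the generalized Ramsey number f_{s+t-2}(n,s,t) equals g(n,s,t). -/
/-- `gRam n s t` is the least `N` such that every graph on `N` vertices contains an
`n`-element vertex set `U` which does not contain both a clique of size `s` and an
independent set of size `t`. -/
noncomputable def gRam (n s t : ℕ) : ℕ :=
  sInf {N | ∀ G : SimpleGraph (Fin N), ∃ U : Finset (Fin N), U.card = n ∧
    ¬((∃ S ⊆ U, G.IsNClique s S) ∧ (∃ T ⊆ U, Gᶜ.IsNClique t T))}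

/-- `fgen k n s t` is the least `N` such that for every red-blue coloring (red = `true`,
blue = `false`) of the `k`-subsets of `Fin N` there is an `n`-set `A` such that either every
`s`-subset of `A` lies in some red `k`-subset, or every `t`-subset of `A` lies in some blue
`k`-subset. -/
noncomputable def fgen (k n s t : ℕ) : ℕ :=
  sInf {N | ∀ χ : Finset (Fin N) → Bool, ∃ A : Finset (Fin N), A.card = n ∧
    ((∀ S ⊆ A, S.card = s → ∃ K : Finset (Fin N), S ⊆ K ∧ K.card = k ∧ χ K = true) ∨
     (∀ T ⊆ A, T.card = t → ∃ K : Finset (Fin N), T ⊆ K ∧ K.card = k ∧ χ K = false))}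

/-!
Write `k = s + t - 2`. A graph `G` yields the colouring in which a
`k`-set is red iff it contains no `s`-clique: an `s`-clique then lies in no red `k`-set, and an
independent `t`-set `I` lies in no blue `k`-set `K`, since an `s`-clique of `K` meets `I` in at most
one vertex and so has at most `1 + (k - t) = s - 1` vertices. Conversely a colouring `χ` yields the
graph joining `u ≠ v` when they lie in a common `s`-set covered by no red `k`-set: such `s`-sets
are cliques, and a `t`-set `T` covered by no blue `k`-set is independent, because an edge `uv` inside
it would give an `s`-set `S` with `|S ∪ T| ≤ k`, and a `k`-set containing `S ∪ T` has no colour.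
-/

open Finset

namespace SimpleGraph

variable {α : Type*} [DecidableEq α] {G : SimpleGraph α}

theorem card_inter_le_one_of_isClique_of_isClique_compl {Q I : Finset α}
    (hQ : G.IsClique (Q : Set α)) (hI : Gᶜ.IsClique (I : Set α)) : #(Q ∩ I) ≤ 1 := by
  refine card_le_one.2 fun a ha b hb => by_contra fun hab => ?_
  rw [mem_inter] at ha hb
  exact (hI ha.2 hb.2 hab).2 (hQ ha.1 hb.1 hab)

theorem not_exists_isNClique_of_isNClique_compl_subset {s t : ℕ} {I K : Finset α}
    (hI : Gᶜ.IsNClique t I) (hIK : I ⊆ K) (hK : #K + 2 ≤ s + t) :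
    ¬∃ Q ⊆ K, G.IsNClique s Q := by
  rintro ⟨Q, hQK, hQ⟩
  have hinter := card_inter_le_one_of_isClique_of_isClique_compl hQ.isClique hI.isClique
  have hdiff : #(Q \ I) ≤ #K - #I :=
    (card_le_card (sdiff_subset_sdiff hQK le_rfl)).trans (card_sdiff_of_subset hIK).le
  have := card_inter_add_card_sdiff Q I
  have := card_le_card hIK
  have := hQ.card_eq
  have := hI.card_eq
  omega

end SimpleGraph

section Coloring

variable {α : Type*}

def IsCovered (χ : Finset α → Bool) (k : ℕ) (c : Bool) (S : Finset α) : Prop :=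
  ∃ K, S ⊆ K ∧ #K = k ∧ χ K = c

theorem IsCovered.mono {χ : Finset α → Bool} {k : ℕ} {c : Bool} {S S' : Finset α}
    (h : IsCovered χ k c S') (hS : S ⊆ S') : IsCovered χ k c S :=
  let ⟨K, hK, hKk, hKc⟩ := h
  ⟨K, hS.trans hK, hKk, hKc⟩

theorem isCovered_true_or_isCovered_false [Fintype α] (χ : Finset α → Bool) {k : ℕ}
    {S : Finset α} (hS : #S ≤ k) (hk : k ≤ Fintype.card α) :
    IsCovered χ k true S ∨ IsCovered χ k false S := by
  obtain ⟨K, hSK, hKk⟩ := exists_superset_card_eq hS hk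
  cases hc : χ K
  · exact .inr ⟨K, hSK, hKk, hc⟩
  · exact .inl ⟨K, hSK, hKk, hc⟩

open Classical in
noncomputable def cliqueFreeColoring (G : SimpleGraph α) (s : ℕ) (K : Finset α) : Bool :=
  decide (¬∃ Q ⊆ K, G.IsNClique s Q)

theorem not_isCovered_true_cliqueFreeColoring {G : SimpleGraph α} {s k : ℕ} {S : Finset α}
    (hS : G.IsNClique s S) : ¬IsCovered (cliqueFreeColoring G s) k true S := by
  rintro ⟨K, hSK, -, hK⟩
  simp only [cliqueFreeColoring, decide_eq_true_eq] at hK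
  exact hK ⟨S, hSK, hS⟩

theorem not_isCovered_false_cliqueFreeColoring [DecidableEq α] {G : SimpleGraph α} {s t k : ℕ}
    {T : Finset α} (hT : Gᶜ.IsNClique t T) (hk : k + 2 ≤ s + t) :
    ¬IsCovered (cliqueFreeColoring G s) k false T := by
  rintro ⟨K, hTK, rfl, hK⟩
  simp only [cliqueFreeColoring, decide_eq_false_iff_not, not_not] at hK
  exact G.not_exists_isNClique_of_isNClique_compl_subset hT hTK hk hK

def uncoveredGraph (χ : Finset α → Bool) (k s : ℕ) : SimpleGraph α where
  Adj u v := u ≠ v ∧ ∃ S : Finset α, u ∈ S ∧ v ∈ S ∧ #S = s ∧ ¬IsCovered χ k true S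
  symm := ⟨fun _ _ ⟨huv, S, hu, hv, hS⟩ => ⟨huv.symm, S, hv, hu, hS⟩⟩
  loopless := ⟨fun _ h => h.1 rfl⟩

theorem isNClique_uncoveredGraph {χ : Finset α → Bool} {k s : ℕ} {S : Finset α}
    (hS : #S = s) (hred : ¬IsCovered χ k true S) : (uncoveredGraph χ k s).IsNClique s S :=
  ⟨fun _ hu _ hv huv => show _ ∧ _ from ⟨huv, S, hu, hv, hS, hred⟩, hS⟩

theorem isNClique_compl_uncoveredGraph [DecidableEq α] [Fintype α] {χ : Finset α → Bool}
    {k s t : ℕ} {T : Finset α} (hT : #T = t) (hblue : ¬IsCovered χ k false T) (hk : s + t ≤ k + 2)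
    (hkα : k ≤ Fintype.card α) : (uncoveredGraph χ k s)ᶜ.IsNClique t T := by
  refine ⟨fun a ha b hb hab => (SimpleGraph.compl_adj _ _ _).2 ⟨hab, ?_⟩, hT⟩
  rintro ⟨-, S, haS, hbS, hS, hred⟩
  have hpair : 2 ≤ #(S ∩ T) := by
    rw [← card_pair hab]
    exact card_le_card (insert_subset_iff.2
      ⟨mem_inter.2 ⟨haS, ha⟩, singleton_subset_iff.2 (mem_inter.2 ⟨hbS, hb⟩)⟩)
  have hunion := card_union_add_card_inter S T
  rcases isCovered_true_or_isCovered_false χ (S := S ∪ T) (by omega) hkα with h | h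
  · exact hred (h.mono subset_union_left)
  · exact hblue (h.mono subset_union_right)

theorem forall_coloring_iff_forall_graph [DecidableEq α] [Fintype α] {k n s t : ℕ}
    (hk : k + 2 = s + t) (hkn : k ≤ n) :
    (∀ χ : Finset α → Bool, ∃ A : Finset α, #A = n ∧
      ((∀ S ⊆ A, #S = s → IsCovered χ k true S) ∨ (∀ T ⊆ A, #T = t → IsCovered χ k false T))) ↔
    ∀ G : SimpleGraph α, ∃ U : Finset α, #U = n ∧
      ¬((∃ S ⊆ U, G.IsNClique s S) ∧ (∃ T ⊆ U, Gᶜ.IsNClique t T)) := by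
  constructor
  · intro hχ G
    obtain ⟨A, hA, hcov⟩ := hχ (cliqueFreeColoring G s)
    refine ⟨A, hA, fun ⟨⟨S, hSA, hS⟩, ⟨T, hTA, hT⟩⟩ => ?_⟩
    rcases hcov with hred | hblue
    · exact not_isCovered_true_cliqueFreeColoring hS (hred S hSA hS.card_eq)
    · exact not_isCovered_false_cliqueFreeColoring hT hk.le (hblue T hTA hT.card_eq)
  · intro hG χ
    obtain ⟨U, hU, hUfree⟩ := hG (uncoveredGraph χ k s)
    have hkα : k ≤ Fintype.card α := hkn.trans (hU ▸ card_le_univ U)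
    refine ⟨U, hU, ?_⟩
    by_contra! ⟨⟨S, hSU, hS, hred⟩, ⟨T, hTU, hT, hblue⟩⟩
    exact hUfree ⟨⟨S, hSU, isNClique_uncoveredGraph hS hred⟩,
      ⟨T, hTU, isNClique_compl_uncoveredGraph hT hblue hk.ge hkα⟩⟩

end Coloring

theorem stmt0_general (s t n : ℕ) (hs : 2 ≤ s) (hn : s + t - 2 ≤ n) :
    fgen (s + t - 2) n s t = gRam n s t := by
  unfold fgen gRam
  congr 1
  ext N
  exact forall_coloring_iff_forall_graph (by omega) hn

theorem stmt0 (s t n : ℕ) (hs : 2 ≤ s) (ht : 2 ≤ t) (hn : s + t - 2 ≤ n) :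
    fgen (s + t - 2) n s t = gRam n s t :=
  stmt0_general s t n hs hn
end

section
/- For every integer m ≥ 1 and integers 2 ≤ s ≤ t, every graph on m vertices contains either a clique of size at least log₂(m)/log₂(2et/s) or an independent set of size at least t·log₂(m)/(s·log₂(2et/s)). -/
open Finset

theorem myRamsey (n : ℕ) : ∀ (a b : ℕ) {V : Type} [DecidableEq V] (G : SimpleGraph V)
    (S : Finset V), a + b ≤ n → (a + b).choose a ≤ S.card →
    (∃ T, T ⊆ S ∧ G.IsNClique (a + 1) T) ∨ (∃ T, T ⊆ S ∧ Gᶜ.IsNClique (b + 1) T) := by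
  induction n with
  | zero =>
    intro a b V _ G S hab hcard
    have ha : a = 0 := by omega
    have hb : b = 0 := by omega
    subst ha; subst hb
    simp only [Nat.choose_self] at hcard
    have hS : 0 < S.card := by omega
    obtain ⟨v, hv⟩ := Finset.card_pos.mp hS
    exact Or.inl ⟨{v}, by simpa using hv, by simp [SimpleGraph.isNClique_one]⟩
  | succ n ih =>
    intro a b V _ G S hab hcard
    classical
    have hpos : 0 < (a + b).choose a := Nat.choose_pos (Nat.le_add_right a b)
    have hS : 0 < S.card := by omega
    obtain ⟨v, hv⟩ := Finset.card_pos.mp hS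
    match a, b with
    | 0, b =>
      exact Or.inl ⟨{v}, by simpa using hv, by simp [SimpleGraph.isNClique_one]⟩
    | a + 1, 0 =>
      exact Or.inr ⟨{v}, by simpa using hv, by simp [SimpleGraph.isNClique_one]⟩
    | a + 1, b + 1 =>
      have hp : (a + 1 + (b + 1)).choose (a + 1)
          = (a + b + 1).choose a + (a + b + 1).choose (a + 1) := by
        rw [show a + 1 + (b + 1) = (a + b + 1) + 1 from by omega, Nat.choose_succ_succ]
      set N := (S.erase v).filter (fun w => G.Adj v w) with hN
      set M := (S.erase v).filter (fun w => ¬ G.Adj v w) with hM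
      have hNM : N.card + M.card = S.card - 1 := by
        rw [hN, hM, Finset.card_filter_add_card_filter_not,
          Finset.card_erase_of_mem hv]
      have hScard : 1 ≤ S.card := by omega
      have hkey : (a + b + 1).choose a ≤ N.card ∨ (a + b + 1).choose (a + 1) ≤ M.card := by
        by_contra h
        push_neg at h
        omega
      rcases hkey with hk | hk
      · rcases ih a (b + 1) G N (by omega)
          (by rwa [show a + (b + 1) = a + b + 1 from by omega]) with ⟨T, hTN, hT⟩ | ⟨T, hTN, hT⟩
        · refine Or.inl ⟨insert v T, ?_, hT.insert ?_⟩
          · exact Finset.insert_subset hv (hTN.trans ((Finset.filter_subset _ _).trans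
              (Finset.erase_subset _ _)))
          · intro w hw
            exact (Finset.mem_filter.mp (hTN hw)).2
        · exact Or.inr ⟨T, hTN.trans ((Finset.filter_subset _ _).trans
            (Finset.erase_subset _ _)), hT⟩
      · rcases ih (a + 1) b G M (by omega)
          (by rwa [show a + 1 + b = a + b + 1 from by omega]) with ⟨T, hTM, hT⟩ | ⟨T, hTM, hT⟩
        · exact Or.inl ⟨T, hTM.trans ((Finset.filter_subset _ _).trans
            (Finset.erase_subset _ _)), hT⟩
        · refine Or.inr ⟨insert v T, ?_, hT.insert ?_⟩
          · exact Finset.insert_subset hv (hTM.trans ((Finset.filter_subset _ _).trans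
              (Finset.erase_subset _ _)))
          · intro w hw
            have hw' := Finset.mem_filter.mp (hTM hw)
            exact (SimpleGraph.compl_adj G v w).mpr ⟨(Finset.ne_of_mem_erase hw'.1).symm, hw'.2⟩

theorem myChooseBound (n k : ℕ) (hk : 1 ≤ k) :
    (n.choose k : ℝ) ≤ (Real.exp 1 * n / k) ^ k := by
  have hkpos : (0:ℝ) < k := by exact_mod_cast hk
  have hfac : (0:ℝ) < (k.factorial : ℝ) := by exact_mod_cast k.factorial_pos
  have h1 : (n.choose k : ℝ) ≤ (n:ℝ) ^ k / (k.factorial : ℝ) := Nat.choose_le_pow_div k n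
  have h2 : (k:ℝ) ^ k / (k.factorial : ℝ) ≤ Real.exp k := Real.pow_div_factorial_le_exp (k:ℝ) (by positivity) k
  have h3 : (k:ℝ) ^ k ≤ Real.exp k * (k.factorial : ℝ) := by
    rw [div_le_iff₀ hfac] at h2; linarith
  refine h1.trans ?_
  have hrw : (Real.exp 1 * n / k) ^ k = Real.exp (k:ℝ) * (n:ℝ) ^ k / (k:ℝ) ^ k := by
    rw [div_pow, mul_pow, ← Real.exp_one_pow]
  rw [hrw, div_le_div_iff₀ hfac (by positivity)]
  have hnk : (0:ℝ) ≤ (n:ℝ) ^ k := by positivity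
  nlinarith [mul_le_mul_of_nonneg_left h3 hnk]

theorem myKey (a b x r : ℝ) (ha : 1 ≤ a) (hax : a ≤ x) (hr : 1 ≤ r) (hb0 : 0 ≤ b)
    (hb : b ≤ r * x) :
    (Real.exp 1 * (a + b) / a) ^ a ≤ (2 * Real.exp 1 * r) ^ x := by
  have ha0 : (0:ℝ) < a := lt_of_lt_of_le one_pos ha
  have hx0 : (0:ℝ) < x := lt_of_lt_of_le ha0 hax
  have hr0 : (0:ℝ) < r := lt_of_lt_of_le one_pos hr
  have hab0 : (0:ℝ) < a + b := by linarith
  have hbase1 : (0:ℝ) < Real.exp 1 * (a + b) / a := by positivity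
  have hbase2 : (0:ℝ) < 2 * Real.exp 1 * r := by positivity
  rw [Real.rpow_def_of_pos hbase1, Real.rpow_def_of_pos hbase2, Real.exp_le_exp]
  have hlog1 : Real.log (Real.exp 1 * (a + b) / a) = 1 + Real.log ((a + b) / a) := by
    rw [mul_div_assoc, Real.log_mul (Real.exp_ne_zero 1) (by positivity), Real.log_exp]
  have hlog2 : Real.log (2 * Real.exp 1 * r) = 1 + Real.log (2 * r) := by
    rw [show 2 * Real.exp 1 * r = Real.exp 1 * (2 * r) from by ring,
      Real.log_mul (Real.exp_ne_zero 1) (by positivity), Real.log_exp]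
  rw [hlog1, hlog2]
  have h2 : Real.log ((a + b) / a) ≤ Real.log (2 * r) + Real.log (x / a) := by
    rw [← Real.log_mul (by positivity) (by positivity)]
    have hle : (a + b) / a ≤ 2 * r * (x / a) := by
      rw [mul_div_assoc']
      gcongr
      nlinarith
    exact Real.log_le_log (by positivity) hle
  have h3 : Real.log (x / a) ≤ x / a - 1 := Real.log_le_sub_one_of_pos (by positivity)
  have h4 : (0:ℝ) ≤ Real.log (2 * r) := Real.log_nonneg (by linarith)
  have h5 : a * (x / a) = x := by field_simp
  nlinarith [mul_le_mul_of_nonneg_left h2 ha0.le, mul_le_mul_of_nonneg_left h3 ha0.le,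
    mul_le_mul_of_nonneg_right hax h4]

theorem stmt4 (m s t : ℕ) (hm : 1 ≤ m) (hs : 2 ≤ s) (hst : s ≤ t)
    (G : SimpleGraph (Fin m)) :
    (∃ S : Finset (Fin m),
      G.IsNClique ⌊Real.logb 2 m / Real.logb 2 (2 * Real.exp 1 * t / s)⌋₊ S) ∨
    (∃ T : Finset (Fin m),
      Gᶜ.IsNClique ⌊(t : ℝ) * Real.logb 2 m / (s * Real.logb 2 (2 * Real.exp 1 * t / s))⌋₊ T) := by
  classical
  have hs0 : (0:ℝ) < s := by
    have : (0:ℕ) < s := by omega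
    exact_mod_cast this
  have ht0 : (0:ℝ) < t := by
    have : (0:ℕ) < t := by omega
    exact_mod_cast this
  have hts : (s:ℝ) ≤ t := by exact_mod_cast hst
  have he2 : (2:ℝ) ≤ Real.exp 1 := by nlinarith [Real.add_one_le_exp 1]
  set c : ℝ := 2 * Real.exp 1 * t / s with hc
  have hc2 : (2:ℝ) ≤ c := by
    rw [hc, le_div_iff₀ hs0]
    nlinarith
  have hlogc : (0:ℝ) < Real.log c := Real.log_pos (by linarith)
  have hlog2 : (0:ℝ) < Real.log 2 := Real.log_pos one_lt_two
  set L : ℝ := Real.logb 2 c with hL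
  have hL1 : (1:ℝ) ≤ L := by
    rw [hL, Real.logb, le_div_iff₀ hlog2, one_mul]
    exact Real.log_le_log two_pos hc2
  have hL0 : (0:ℝ) < L := lt_of_lt_of_le one_pos hL1
  have hm1 : (1:ℝ) ≤ (m:ℝ) := by exact_mod_cast hm
  have hlogm : (0:ℝ) ≤ Real.logb 2 m := Real.logb_nonneg one_lt_two hm1
  set x : ℝ := Real.logb 2 m / L with hx
  have hx0 : (0:ℝ) ≤ x := div_nonneg hlogm hL0.le
  set r : ℝ := (t:ℝ) / s with hr
  have hr1 : (1:ℝ) ≤ r := by rw [hr, le_div_iff₀ hs0, one_mul]; exact hts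
  have hrx0 : (0:ℝ) ≤ r * x := mul_nonneg (by linarith) hx0
  have harg2 : (t:ℝ) * Real.logb 2 m / (s * L) = r * x := by
    rw [hr, hx, div_mul_div_comm]
  rw [harg2]
  set A := ⌊x⌋₊ with hA
  set B := ⌊r * x⌋₊ with hB
  rcases Nat.eq_zero_or_pos A with hA0 | hA1
  · exact Or.inl ⟨∅, by rw [hA0]; exact SimpleGraph.isNClique_empty.mpr rfl⟩
  have hAB : A ≤ B := Nat.floor_le_floor (le_mul_of_one_le_left hx0 hr1)
  have hB1 : 1 ≤ B := le_trans hA1 hAB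
  -- the key counting bound
  have hchoose : ((A - 1) + (B - 1)).choose (A - 1) ≤ m := by
    rcases Nat.lt_or_ge A 2 with hA2 | hA2
    · have : A - 1 = 0 := by omega
      rw [this, Nat.zero_add, Nat.choose_zero_right]
      exact hm
    · -- A ≥ 2, use the real bound
      have hA1R : (1:ℝ) ≤ ((A - 1 : ℕ) : ℝ) := by
        have : (1:ℕ) ≤ A - 1 := by omega
        exact_mod_cast this
      have hAx : ((A - 1 : ℕ) : ℝ) ≤ x := by
        have h1 : ((A - 1 : ℕ) : ℝ) ≤ (A : ℝ) := by exact_mod_cast Nat.sub_le A 1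
        exact h1.trans (Nat.floor_le hx0)
      have hBx : ((B - 1 : ℕ) : ℝ) ≤ r * x := by
        have h1 : ((B - 1 : ℕ) : ℝ) ≤ (B : ℝ) := by exact_mod_cast Nat.sub_le B 1
        exact h1.trans (Nat.floor_le hrx0)
      have hcb := myChooseBound ((A - 1) + (B - 1)) (A - 1) (by omega)
      have hkey := myKey ((A - 1 : ℕ) : ℝ) ((B - 1 : ℕ) : ℝ) x r hA1R hAx hr1
        (by positivity) hBx
      have hcast : (((A - 1) + (B - 1) : ℕ) : ℝ) = ((A - 1 : ℕ) : ℝ) + ((B - 1 : ℕ) : ℝ) := by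
        push_cast; ring
      have hcb' : ((((A - 1) + (B - 1)).choose (A - 1) : ℕ) : ℝ) ≤
          (Real.exp 1 * (((A - 1 : ℕ) : ℝ) + ((B - 1 : ℕ) : ℝ)) / ((A - 1 : ℕ) : ℝ))
            ^ ((A - 1 : ℕ) : ℝ) := by
        rw [Real.rpow_natCast]
        rw [hcast] at hcb
        exact hcb
      have hcr : 2 * Real.exp 1 * r = c := by rw [hr, hc]; ring
      have hcx : (2 * Real.exp 1 * r) ^ (x : ℝ) = (m : ℝ) := by
        rw [hcr, Real.rpow_def_of_pos (by linarith)]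
        have hlogeq : Real.log c * x = Real.log m := by
          rw [hx, hL, Real.logb, Real.logb]
          field_simp
        rw [hlogeq, Real.exp_log (by linarith)]
      have : ((((A - 1) + (B - 1)).choose (A - 1) : ℕ) : ℝ) ≤ (m : ℝ) := by
        calc ((((A - 1) + (B - 1)).choose (A - 1) : ℕ) : ℝ) ≤ _ := hcb'
          _ ≤ (2 * Real.exp 1 * r) ^ (x : ℝ) := hkey
          _ = (m : ℝ) := hcx
      exact_mod_cast this
  have hcard : ((A - 1) + (B - 1)).choose (A - 1) ≤ (Finset.univ : Finset (Fin m)).card := by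
    simpa using hchoose
  rcases myRamsey ((A - 1) + (B - 1)) (A - 1) (B - 1) G Finset.univ le_rfl hcard with
    ⟨T, _, hT⟩ | ⟨T, _, hT⟩
  · left
    exact ⟨T, by rwa [Nat.sub_add_cancel hA1] at hT⟩
  · right
    exact ⟨T, by rwa [Nat.sub_add_cancel hB1] at hT⟩
end

section
/- For sufficiently large n and 2 ≤ s ≤ t ≤ n/log₂ n, g(n,s,t) ≤ 2^{(4n/t)·log₂(2et/s)}. -/
section Aux
open Finset

lemma my_ramsey {V : Type*} [DecidableEq V] (G : SimpleGraph V) :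
    ∀ (m a b : ℕ), a + b ≤ m → ∀ s : Finset V, (a + b).choose a ≤ s.card →
      (∃ K ⊆ s, G.IsNClique (a + 1) K) ∨ (∃ K ⊆ s, Gᶜ.IsNClique (b + 1) K) := by
  classical
  intro m
  induction m with
  | zero =>
    intro a b hab s hs
    obtain ⟨rfl, rfl⟩ : a = 0 ∧ b = 0 := by omega
    obtain ⟨v, hv⟩ := card_pos.mp (Nat.lt_of_lt_of_le Nat.zero_lt_one (by simpa using hs))
    exact Or.inl ⟨{v}, by simpa using hv, by simp [SimpleGraph.isNClique_iff, SimpleGraph.IsClique]⟩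
  | succ m ih =>
    intro a b hab s hs
    match a, b with
    | 0, b =>
      have : 0 < s.card := lt_of_lt_of_le (Nat.choose_pos (Nat.zero_le _)) hs
      obtain ⟨v, hv⟩ := card_pos.mp this
      exact Or.inl ⟨{v}, by simpa using hv,
        by simp [SimpleGraph.isNClique_iff, SimpleGraph.IsClique]⟩
    | a+1, 0 =>
      have : 0 < s.card := lt_of_lt_of_le (Nat.choose_pos (by omega)) hs
      obtain ⟨v, hv⟩ := card_pos.mp this
      exact Or.inr ⟨{v}, by simpa using hv,
        by simp [SimpleGraph.isNClique_iff, SimpleGraph.IsClique]⟩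
    | a+1, b+1 =>
      have hpos : 0 < s.card := lt_of_lt_of_le (Nat.choose_pos (by omega)) hs
      obtain ⟨v, hv⟩ := card_pos.mp hpos
      set A := (s.erase v).filter (fun u => G.Adj v u) with hA
      set B := (s.erase v).filter (fun u => ¬ G.Adj v u) with hB
      have hABcard : A.card + B.card = s.card - 1 := by
        rw [hA, hB, card_filter_add_card_filter_not, card_erase_of_mem hv]
      have hpascal : (a + 1 + (b + 1)).choose (a + 1)
          = (a + (b+1)).choose a + ((a+1) + b).choose (a+1) := by
        have : a + 1 + (b + 1) = (a + (b+1)) + 1 := by ring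
        rw [this, Nat.choose_succ_succ']
        congr 2
        omega
      have hcases : (a + (b+1)).choose a ≤ A.card ∨ ((a+1) + b).choose (a+1) ≤ B.card := by
        by_contra hc
        push_neg at hc
        omega
      rcases hcases with hc | hc
      · rcases ih a (b+1) (by omega) A hc with ⟨K, hKA, hK⟩ | ⟨K, hKA, hK⟩
        · refine Or.inl ⟨insert v K, ?_, hK.insert ?_⟩
          · refine insert_subset hv (hKA.trans ?_)
            exact (filter_subset _ _).trans (erase_subset _ _)
          · intro u hu
            exact (mem_filter.mp (hKA hu)).2
        · exact Or.inr ⟨K, hKA.trans ((filter_subset _ _).trans (erase_subset _ _)), hK⟩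
      · rcases ih (a+1) b (by omega) B hc with ⟨K, hKB, hK⟩ | ⟨K, hKB, hK⟩
        · exact Or.inl ⟨K, hKB.trans ((filter_subset _ _).trans (erase_subset _ _)), hK⟩
        · refine Or.inr ⟨insert v K, ?_, hK.insert ?_⟩
          · refine insert_subset hv (hKB.trans ?_)
            exact (filter_subset _ _).trans (erase_subset _ _)
          · intro u hu
            have hu' := mem_filter.mp (hKB hu)
            have hne : v ≠ u := fun h => (mem_erase.mp hu'.1).1 h.symm
            exact ⟨hne, hu'.2⟩

lemma my_extract {V : Type*} [DecidableEq V] (G : SimpleGraph V) (p q R : ℕ)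
    (hR : ∀ s : Finset V, R ≤ s.card →
      (∃ K ⊆ s, G.IsNClique q K) ∨ (∃ K ⊆ s, Gᶜ.IsNClique p K)) :
    ∀ (m a b : ℕ), a + b ≤ m → ∀ s : Finset V, R + a * q + b * p ≤ s.card →
      (∃ U ⊆ s, U.card = a * q ∧ ∀ T ⊆ U, Gᶜ.IsClique (T : Set V) → T.card ≤ a) ∨
      (∃ U ⊆ s, U.card = b * p ∧ ∀ T ⊆ U, G.IsClique (T : Set V) → T.card ≤ b) := by
  classical
  intro m
  induction m with
  | zero =>
    intro a b hab s hs
    obtain ⟨rfl, rfl⟩ : a = 0 ∧ b = 0 := by omega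
    refine Or.inl ⟨∅, empty_subset _, by simp, ?_⟩
    intro T hT _
    simp [subset_empty.mp hT]
  | succ m ih =>
    intro a b hab s hs
    match a, b with
    | 0, b =>
      refine Or.inl ⟨∅, empty_subset _, by simp, ?_⟩
      intro T hT _
      simp [subset_empty.mp hT]
    | a+1, 0 =>
      refine Or.inr ⟨∅, empty_subset _, by simp, ?_⟩
      intro T hT _
      simp [subset_empty.mp hT]
    | a+1, b+1 =>
      rcases hR s (by omega) with ⟨K, hKs, hK⟩ | ⟨K, hKs, hK⟩
      · have hcard : R + a * q + (b+1) * p ≤ (s \ K).card := by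
          rw [card_sdiff_of_subset hKs, hK.card_eq]
          have : (a+1) * q = a * q + q := by ring
          omega
        rcases ih a (b+1) (by omega) (s \ K) hcard with ⟨U, hUs, hUcard, hUbound⟩ | h
        · refine Or.inl ⟨U ∪ K, union_subset (hUs.trans (sdiff_subset)) hKs, ?_, ?_⟩
          · rw [card_union_of_disjoint, hUcard, hK.card_eq]; · ring
            exact Finset.disjoint_left.mpr fun x hx => (mem_sdiff.mp (hUs hx)).2
          · intro T hT hTind
            have h1 : T \ K ⊆ U := fun x hx => by
              rcases mem_union.mp (hT (mem_sdiff.mp hx).1) with h | h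
              · exact h
              · exact absurd h (mem_sdiff.mp hx).2
            have h2 : (T \ K).card ≤ a := hUbound _ h1 (hTind.subset (by
              intro x hx; exact (mem_sdiff.mp (by exact_mod_cast hx)).1))
            have h3 : (T ∩ K).card ≤ 1 := by
              refine card_le_one.mpr fun u hu v hv => ?_
              by_contra hne
              have hadj : G.Adj u v := hK.isClique (mem_inter.mp hu).2 (mem_inter.mp hv).2 hne
              have := hTind (mem_inter.mp hu).1 (mem_inter.mp hv).1 hne
              exact ((SimpleGraph.compl_adj _ _ _).mp this).2 hadj
            calc T.card = (T \ K).card + (T ∩ K).card := (card_sdiff_add_card_inter T K).symm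
              _ ≤ a + 1 := by omega
        · obtain ⟨U, hUs, hrest⟩ := h
          exact Or.inr ⟨U, hUs.trans sdiff_subset, hrest⟩
      · have hcard : R + (a+1) * q + b * p ≤ (s \ K).card := by
          rw [card_sdiff_of_subset hKs, hK.card_eq]
          have : (b+1) * p = b * p + p := by ring
          omega
        rcases ih (a+1) b (by omega) (s \ K) hcard with h | ⟨U, hUs, hUcard, hUbound⟩
        · obtain ⟨U, hUs, hrest⟩ := h
          exact Or.inl ⟨U, hUs.trans sdiff_subset, hrest⟩
        · refine Or.inr ⟨U ∪ K, union_subset (hUs.trans (sdiff_subset)) hKs, ?_, ?_⟩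
          · rw [card_union_of_disjoint, hUcard, hK.card_eq]; · ring
            exact Finset.disjoint_left.mpr fun x hx => (mem_sdiff.mp (hUs hx)).2
          · intro T hT hTclq
            have h1 : T \ K ⊆ U := fun x hx => by
              rcases mem_union.mp (hT (mem_sdiff.mp hx).1) with h | h
              · exact h
              · exact absurd h (mem_sdiff.mp hx).2
            have h2 : (T \ K).card ≤ b := hUbound _ h1 (hTclq.subset (by
              intro x hx; exact (mem_sdiff.mp (by exact_mod_cast hx)).1))
            have h3 : (T ∩ K).card ≤ 1 := by
              refine card_le_one.mpr fun u hu v hv => ?_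
              by_contra hne
              have hadj : G.Adj u v := hTclq (mem_inter.mp hu).1 (mem_inter.mp hv).1 hne
              have := hK.isClique (mem_inter.mp hu).2 (mem_inter.mp hv).2 hne
              exact ((SimpleGraph.compl_adj _ _ _).mp this).2 hadj
            calc T.card = (T \ K).card + (T ∩ K).card := (card_sdiff_add_card_inter T K).symm
              _ ≤ b + 1 := by omega

lemma gRam_le_of (n s t q p a b : ℕ) (hq : 1 ≤ q) (hp : 1 ≤ p)
    (hna : n ≤ a * q) (hnb : n ≤ b * p) (hat : a < t) (hbs : b < s) :
    gRam n s t ≤ (q - 1 + (p - 1)).choose (q - 1) + a * q + b * p := by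
  classical
  set R := (q - 1 + (p - 1)).choose (q - 1) with hRdef
  apply Nat.sInf_le
  show ∀ G : SimpleGraph (Fin (R + a*q + b*p)), _
  intro G
  have hR : ∀ w : Finset (Fin (R + a*q + b*p)), R ≤ w.card →
      (∃ K ⊆ w, G.IsNClique q K) ∨ (∃ K ⊆ w, Gᶜ.IsNClique p K) := by
    intro w hw
    have := my_ramsey G (q-1+(p-1)) (q-1) (p-1) le_rfl w hw
    rwa [Nat.sub_add_cancel hq, Nat.sub_add_cancel hp] at this
  have hcard : R + a*q + b*p ≤ (Finset.univ : Finset (Fin (R+a*q+b*p))).card := by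
    simp
  rcases my_extract G p q R hR (a+b) a b le_rfl Finset.univ hcard with
    ⟨U, _, hUcard, hUb⟩ | ⟨U, _, hUcard, hUb⟩
  · obtain ⟨U', hU'U, hU'card⟩ := exists_subset_card_eq (show n ≤ U.card by rw [hUcard]; exact hna)
    refine ⟨U', hU'card, ?_⟩
    rintro ⟨-, ⟨T, hTU, hT⟩⟩
    have h1 : T.card ≤ a := hUb T (hTU.trans hU'U) hT.isClique
    have h2 := hT.card_eq
    omega
  · obtain ⟨U', hU'U, hU'card⟩ := exists_subset_card_eq (show n ≤ U.card by rw [hUcard]; exact hnb)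
    refine ⟨U', hU'card, ?_⟩
    rintro ⟨⟨S, hSU, hS⟩, -⟩
    have h1 : S.card ≤ b := hUb S (hSU.trans hU'U) hS.isClique
    have h2 := hS.card_eq
    omega

set_option maxHeartbeats 2000000 in
theorem stmt5 :
    ∃ n₀ : ℕ, ∀ n : ℕ, n₀ ≤ n → ∀ s t : ℕ, 2 ≤ s → s ≤ t →
      (t : ℝ) ≤ n / Real.logb 2 n →
      (gRam n s t : ℝ) ≤
        (2 : ℝ) ^ ((4 * (n : ℝ) / t) * Real.logb 2 (2 * Real.exp 1 * t / s)) := by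
  refine ⟨65536, fun n hn s t hs hst ht => ?_⟩
  have hnR : (65536:ℝ) ≤ (n:ℝ) := by exact_mod_cast hn
  have hn0 : (0:ℝ) < n := by linarith
  have hsR : (2:ℝ) ≤ s := by exact_mod_cast hs
  have hstR : (s:ℝ) ≤ t := by exact_mod_cast hst
  have hs0 : (0:ℝ) < s := by linarith
  have ht0 : (0:ℝ) < t := by linarith
  set ℓ := Real.logb 2 (n:ℝ) with hldef
  have hl16 : (16:ℝ) ≤ ℓ := by
    rw [hldef]
    have h1 : Real.logb 2 ((2:ℝ)^(16:ℕ)) = 16 := by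
      rw [Real.logb_pow, Real.logb_self_eq_one (by norm_num)]
      norm_num
    rw [← h1]
    exact Real.logb_le_logb_of_le (by norm_num) (by positivity) (by norm_num at hnR ⊢; linarith)
  have hl0 : (0:ℝ) < ℓ := by linarith
  have htl : (t:ℝ) * ℓ ≤ n := by
    rw [← le_div_iff₀ hl0]; exact ht
  have htnR : (t:ℝ) ≤ n := by
    have h := mul_le_mul_of_nonneg_left hl16 ht0.le
    linarith [htl, h]
  have htn : t ≤ n := by exact_mod_cast htnR
  have ht2 : 2 ≤ t := le_trans hs hst
  have hn1 : 1 ≤ n := by omega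
  set q' : ℕ := (2*n-1)/t with hq'def
  set p' : ℕ := (n-1)/(s-1) with hp'def
  set q : ℕ := q' + 1 with hqdef
  set p : ℕ := p' + 1 with hpdef
  set a : ℕ := (n-1)/q + 1 with hadef
  set b : ℕ := (n-1)/p + 1 with hbdef
  have hq0 : 0 < q := Nat.succ_pos _
  have hp0 : 0 < p := Nat.succ_pos _
  have ht0' : 0 < t := by omega
  have hs1 : 0 < s - 1 := by omega
  have hna : n ≤ a * q := by
    have h1 := Nat.lt_div_mul_add (a := n-1) hq0
    have h2 : a * q = (n-1)/q * q + q := by rw [hadef]; ring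
    set X := (n-1)/q * q
    omega
  have hnb : n ≤ b * p := by
    have h1 := Nat.lt_div_mul_add (a := n-1) hp0
    have h2 : b * p = (n-1)/p * p + p := by rw [hbdef]; ring
    set X := (n-1)/p * p
    omega
  have htq1 : 2*n ≤ t*q' + t := by
    have h1 := Nat.lt_div_mul_add (a := 2*n-1) ht0'
    have h2 : t * q' = (2*n-1)/t * t := by rw [hq'def]; ring
    set X := (2*n-1)/t * t
    omega
  have htq2 : t * q' ≤ 2*n - 1 := by
    have h1 := Nat.div_mul_le_self (2*n-1) t
    have h2 : t * q' = (2*n-1)/t * t := by rw [hq'def]; ring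
    omega
  have hqn : q ≤ n := by
    have h1 : (2*n-1)/t ≤ n - 1 := by
      rw [Nat.div_le_iff_le_mul_add_pred ht0']
      have h3 : 2*n ≤ t*n := Nat.mul_le_mul_right n ht2
      have h2 : t*(n-1) + t = t*n := by
        have h4 : n - 1 + 1 = n := by omega
        nth_rewrite 2 [← h4]; ring
      set X := t*(n-1)
      set Y := t*n
      omega
    omega
  have hat : a < t := by
    have key : n ≤ (t-1) * q := by
      have h1 : (t-1)*q + q = t*q := by
        have h4 : t - 1 + 1 = t := by omega
        nth_rewrite 2 [← h4]; ring
      have h2 : t*q = t*q' + t := by rw [hqdef]; ring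
      set X := (t-1)*q
      set Y := t*q
      set Z := t*q'
      omega
    have h3 : (n-1)/q < t-1 := by
      rw [Nat.div_lt_iff_lt_mul hq0]
      calc n - 1 < n := by omega
        _ ≤ (t-1)*q := key
    omega
  have hsp1 : (s-1) * p' ≤ n - 1 := by
    have h1 := Nat.div_mul_le_self (n-1) (s-1)
    have h2 : (s-1) * p' = (n-1)/(s-1) * (s-1) := by rw [hp'def]; ring
    omega
  have hpn : p ≤ n := by
    have h5 : p' ≤ n - 1 := by rw [hp'def]; exact Nat.div_le_self _ _
    omega
  have hbs : b < s := by
    have key : n ≤ (s-1) * p := by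
      have h1 := Nat.lt_div_mul_add (a := n-1) hs1
      have h2 : (s-1)*p = (n-1)/(s-1) * (s-1) + (s-1) := by rw [hpdef, hp'def]; ring
      set X := (n-1)/(s-1) * (s-1)
      omega
    have h3 : (n-1)/p < s-1 := by
      rw [Nat.div_lt_iff_lt_mul hp0]
      calc n - 1 < n := by omega
        _ ≤ (s-1)*p := key
    omega
  have haq_ub : a * q ≤ 2*n := by
    have h1 := Nat.div_mul_le_self (n-1) q
    have h2 : a * q = (n-1)/q * q + q := by rw [hadef]; ring
    set X := (n-1)/q * q
    omega
  have hbp_ub : b * p ≤ 2*n := by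
    have h1 := Nat.div_mul_le_self (n-1) p
    have h2 : b * p = (n-1)/p * p + p := by rw [hbdef]; ring
    set X := (n-1)/p * p
    omega
  have hq'1 : 1 ≤ q' := by
    rw [hq'def, Nat.one_le_div_iff ht0']
    omega
  have hsq : s * q' ≤ 2*n := by
    calc s * q' ≤ t * q' := Nat.mul_le_mul_right q' hst
      _ ≤ 2*n - 1 := htq2
      _ ≤ 2*n := by omega
  have hsp : s * p' ≤ 2*n := by
    have hp'n : p' ≤ n := by rw [hp'def]; exact (Nat.div_le_self _ _).trans (by omega)
    have h6 : s * p' = (s-1)*p' + p' := by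
      have h : s - 1 + 1 = s := by omega
      nth_rewrite 1 [← h]; ring
    omega
  have htq'n : n ≤ t * q' := by omega
  have hmain := gRam_le_of n s t q p a b (by omega) (by omega) hna hnb hat hbs
  have hR0 : (q - 1 + (p - 1)).choose (q - 1) = (q' + p').choose q' := by
    rw [hqdef, hpdef]; simp
  rw [hR0] at hmain
  set L := Real.logb 2 (2 * Real.exp 1 * t / s) with hLdef
  set E := 4 * (n:ℝ) / t * L with hEdef
  have he2 : (2:ℝ) ≤ Real.exp 1 := by
    have := Real.add_one_le_exp 1; linarith
  have he0 : (0:ℝ) < Real.exp 1 := Real.exp_pos 1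
  have hc0pos : (0:ℝ) < 2 * Real.exp 1 * t / s := by positivity
  have hL2 : (2:ℝ) ≤ L := by
    have h4 : (4:ℝ) ≤ 2 * Real.exp 1 * t / s := by
      rw [le_div_iff₀ hs0]
      have h := mul_le_mul_of_nonneg_right he2 ht0.le
      linarith [hstR, h]
    have hlog4 : Real.logb 2 ((2:ℝ)^(2:ℕ)) = 2 := by
      rw [Real.logb_pow, Real.logb_self_eq_one (by norm_num)]
      norm_num
    rw [hLdef]
    calc (2:ℝ) = Real.logb 2 ((2:ℝ)^(2:ℕ)) := hlog4.symm
      _ ≤ Real.logb 2 (2 * Real.exp 1 * t / s) :=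
          Real.logb_le_logb_of_le (by norm_num) (by positivity) (by norm_num at h4 ⊢; linarith)
  set D := 2 * (n:ℝ) / t with hDdef
  have hlnt : ℓ ≤ (n:ℝ)/t := by
    rw [le_div_iff₀ ht0]
    calc ℓ * t = t * ℓ := mul_comm _ _
      _ ≤ n := htl
  have hD32 : (32:ℝ) ≤ D := by
    rw [hDdef]
    have h7 : (16:ℝ) ≤ (n:ℝ)/t := le_trans hl16 hlnt
    rw [le_div_iff₀ ht0] at h7
    rw [le_div_iff₀ ht0]
    linarith
  have hD2l : 2*ℓ ≤ D := by
    rw [hDdef, mul_div_assoc]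
    linarith
  have hq'D : (q':ℝ) ≤ D := by
    have h1 : ((q':ℕ):ℝ) ≤ ((2*n-1:ℕ):ℝ)/((t:ℕ):ℝ) := by
      rw [hq'def]; exact Nat.cast_div_le
    have h2 : ((2*n-1:ℕ):ℝ) ≤ 2*(n:ℝ) := by
      have : (2*n-1:ℕ) ≤ 2*n := by omega
      calc ((2*n-1:ℕ):ℝ) ≤ ((2*n:ℕ):ℝ) := by exact_mod_cast this
        _ = 2*(n:ℝ) := by push_cast; ring
    rw [hDdef]
    calc (q':ℝ) ≤ ((2*n-1:ℕ):ℝ)/(t:ℝ) := h1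
      _ ≤ 2*(n:ℝ)/(t:ℝ) := by gcongr
  -- choose bound
  set M : ℕ := q' + p' with hMdef
  have hq'R : (1:ℝ) ≤ (q':ℝ) := by exact_mod_cast hq'1
  have hq'pos : (0:ℝ) < (q':ℝ) := by linarith
  have hfactpos : (0:ℝ) < (Nat.factorial q' : ℝ) := by exact_mod_cast Nat.factorial_pos q'
  have hchoose1 : ((M.choose q' : ℕ):ℝ) ≤ ((M:ℝ))^(q':ℕ) / (Nat.factorial q' : ℝ) := by
    have h := Nat.choose_le_pow_div (α := ℝ) q' M
    calc ((M.choose q' : ℕ):ℝ) ≤ ((M^q' : ℕ):ℝ) / (Nat.factorial q' : ℝ) := by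
          exact_mod_cast h
      _ = ((M:ℝ))^(q':ℕ) / (Nat.factorial q' : ℝ) := by push_cast; ring
  have hexp : ((q':ℝ))^(q':ℕ) ≤ Real.exp 1 ^ (q':ℕ) * (Nat.factorial q' : ℝ) := by
    have hsum := Real.sum_le_exp_of_nonneg (x := (q':ℝ)) (by positivity) (q'+1)
    have hterm : ((q':ℝ))^(q':ℕ) / (Nat.factorial q' : ℝ)
        ≤ ∑ i ∈ Finset.range (q'+1), (q':ℝ)^i / (Nat.factorial i : ℝ) :=
      Finset.single_le_sum (f := fun i => (q':ℝ)^i / (Nat.factorial i : ℝ)) (fun i _ => by positivity) (Finset.self_mem_range_succ q')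
    have h2 := hterm.trans hsum
    rw [div_le_iff₀ hfactpos] at h2
    have h3 : Real.exp (q':ℝ) = Real.exp 1 ^ (q':ℕ) := by
      rw [← Real.exp_nat_mul]; norm_num
    rw [h3] at h2
    exact h2
  have hMe : ((M:ℝ)) ^ (q':ℕ) / (Nat.factorial q':ℝ)
      ≤ ((M:ℝ) * Real.exp 1 / (q':ℝ)) ^ (q':ℕ) := by
    rw [div_pow, mul_pow, div_le_div_iff₀ hfactpos (by positivity)]
    calc (M:ℝ)^(q':ℕ) * (q':ℝ)^(q':ℕ)
        ≤ (M:ℝ)^(q':ℕ) * (Real.exp 1 ^ (q':ℕ) * (Nat.factorial q':ℝ)) :=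
          mul_le_mul_of_nonneg_left hexp (by positivity)
      _ = (M:ℝ)^(q':ℕ) * Real.exp 1 ^ (q':ℕ) * (Nat.factorial q':ℝ) := by ring
  have hbase : (M:ℝ) * Real.exp 1 / (q':ℝ) ≤ 6 * Real.exp 1 * (t:ℝ) / (s:ℝ) := by
    rw [div_le_div_iff₀ hq'pos hs0]
    have hsM : (s:ℝ) * (M:ℝ) ≤ 4 * n := by
      have h8 : s * M ≤ 4 * n := by
        have h9 : s * M = s*q' + s*p' := by rw [hMdef]; ring
        omega
      calc (s:ℝ) * (M:ℝ) = ((s*M : ℕ):ℝ) := by push_cast; ring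
        _ ≤ ((4*n : ℕ):ℝ) := by exact_mod_cast h8
        _ = 4*(n:ℝ) := by push_cast; ring
    have hnt : (n:ℝ) ≤ (t:ℝ)*(q':ℝ) := by exact_mod_cast htq'n
    linarith [mul_le_mul_of_nonneg_right hsM he0.le,
      mul_le_mul_of_nonneg_right hnt he0.le,
      mul_nonneg (mul_pos ht0 hq'pos).le he0.le]
  have hA : ((M.choose q' : ℕ):ℝ) ≤ (6 * Real.exp 1 * (t:ℝ)/(s:ℝ)) ^ (q':ℕ) := by
    refine (hchoose1.trans hMe).trans ?_
    exact pow_le_pow_left₀ (by positivity) hbase _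
  have hc6pos : (0:ℝ) < 6 * Real.exp 1 * (t:ℝ) / (s:ℝ) := by positivity
  have hpow_rpow : (6 * Real.exp 1 * (t:ℝ)/(s:ℝ)) ^ (q':ℕ)
      = (2:ℝ) ^ (Real.logb 2 (6 * Real.exp 1 * (t:ℝ) / (s:ℝ)) * (q':ℝ)) := by
    conv_lhs => rw [← Real.rpow_logb (b := 2) (by norm_num) (by norm_num) hc6pos]
    rw [← Real.rpow_natCast ((2:ℝ) ^ (Real.logb 2 (6 * Real.exp 1 * (t:ℝ) / (s:ℝ)))) q',
      ← Real.rpow_mul (by norm_num)]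
  have hlog6 : Real.logb 2 (6 * Real.exp 1 * (t:ℝ)/(s:ℝ)) = Real.logb 2 3 + L := by
    have h10 : 6 * Real.exp 1 * (t:ℝ) / (s:ℝ) = 3 * (2*Real.exp 1*(t:ℝ)/(s:ℝ)) := by ring
    rw [hLdef, h10, Real.logb_mul (by norm_num) (ne_of_gt hc0pos)]
  have hlog3 : Real.logb 2 3 ≤ 8/5 := by
    have h1 : Real.log ((3:ℝ)^(5:ℕ)) ≤ Real.log ((2:ℝ)^(8:ℕ)) :=
      Real.log_le_log (by positivity) (by norm_num)
    rw [Real.log_pow, Real.log_pow] at h1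
    have hlog2 : (0:ℝ) < Real.log 2 := Real.log_pos (by norm_num)
    rw [Real.logb, div_le_iff₀ hlog2]
    push_cast at h1
    linarith
  have hlog3nn : (0:ℝ) ≤ Real.logb 2 3 := Real.logb_nonneg (by norm_num) (by norm_num)
  have hEeq : E = 2 * D * L := by rw [hEdef, hDdef]; ring
  have hexpo : (Real.logb 2 3 + L) * (q':ℝ) ≤ E - 1 := by
    have k1 : (Real.logb 2 3 + L) * (q':ℝ) ≤ (Real.logb 2 3 + L) * D :=
      mul_le_mul_of_nonneg_left hq'D (by linarith)
    have k2 : (Real.logb 2 3 + L) * D ≤ (8/5 + L) * D :=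
      mul_le_mul_of_nonneg_right (by linarith) (by linarith)
    have k3 : (32:ℝ)*(2/5) ≤ D * (L - 8/5) :=
      mul_le_mul hD32 (by linarith) (by norm_num) (by linarith)
    rw [hEeq]
    linarith [k1, k2, k3]
  have hAfinal : ((M.choose q' : ℕ):ℝ) ≤ (2:ℝ) ^ (E - 1) := by
    rw [hpow_rpow, hlog6] at hA
    refine hA.trans ?_
    exact Real.rpow_le_rpow_of_exponent_le (by norm_num) hexpo
  have hBfinal : ((a*q + b*p : ℕ):ℝ) ≤ (2:ℝ) ^ (E - 1) := by
    have h4n : ((a*q + b*p : ℕ):ℝ) ≤ 4*(n:ℝ) := by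
      have h11 : a*q + b*p ≤ 4*n := by omega
      calc ((a*q + b*p : ℕ):ℝ) ≤ ((4*n : ℕ):ℝ) := by exact_mod_cast h11
        _ = 4*(n:ℝ) := by push_cast; ring
    have hE8 : 8 * ℓ ≤ E := by
      rw [hEeq]
      have h := mul_le_mul hD2l hL2 (by norm_num) (by linarith : (0:ℝ) ≤ D)
      linarith
    have h3l : 3*ℓ ≤ E - 1 := by linarith
    have hcube : (2:ℝ) ^ (3*ℓ) = (n:ℝ)^(3:ℕ) := by
      rw [show 3*ℓ = ℓ*3 by ring, Real.rpow_mul (by norm_num), hldef,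
        Real.rpow_logb (by norm_num) (by norm_num) hn0,
        ← Real.rpow_natCast (n:ℝ) 3]
      norm_num
    have hn3 : 4*(n:ℝ) ≤ (n:ℝ)^(3:ℕ) := by
      have h1 : (4:ℝ) ≤ (n:ℝ)*(n:ℝ) := by nlinarith
      have h2 := mul_le_mul_of_nonneg_right h1 hn0.le
      calc 4*(n:ℝ) ≤ (n:ℝ)*(n:ℝ)*(n:ℝ) := h2
        _ = (n:ℝ)^(3:ℕ) := by ring
    calc ((a*q + b*p : ℕ):ℝ) ≤ 4*(n:ℝ) := h4n
      _ ≤ (n:ℝ)^(3:ℕ) := hn3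
      _ = (2:ℝ)^(3*ℓ) := hcube.symm
      _ ≤ (2:ℝ)^(E-1) := Real.rpow_le_rpow_of_exponent_le (by norm_num) h3l
  have hsum : (2:ℝ)^(E-1) + (2:ℝ)^(E-1) = (2:ℝ)^E := by
    have h12 : E = 1 + (E-1) := by ring
    rw [h12, Real.rpow_add (by norm_num), Real.rpow_one]
    ring
  calc (gRam n s t : ℝ) ≤ (((M.choose q') + a*q + b*p : ℕ):ℝ) := by exact_mod_cast hmain
    _ = ((M.choose q' : ℕ):ℝ) + ((a*q + b*p : ℕ):ℝ) := by push_cast; ring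
    _ ≤ (2:ℝ)^(E-1) + (2:ℝ)^(E-1) := add_le_add hAfinal hBfinal
    _ = (2:ℝ)^E := hsum

end Aux
end

section
/- For every r ≥ 2 and k ≥ 3, ssat_r(K_k) ≥ ssat_{r-1}(K_k) + r/2. -/
/-- `S` is monochromatic of color `i` under the edge-coloring `c`. -/
def IsMonoOn {n r : ℕ} (c : Sym2 (Fin n) → Fin r) (i : Fin r) (S : Finset (Fin n)) : Prop :=
  ∀ x ∈ S, ∀ y ∈ S, x ≠ y → c s(x, y) = i

/-- `c'` extends the edge-coloring `c` by one new vertex. -/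
def ColExtends {n r : ℕ} (c : Sym2 (Fin n) → Fin r) (c' : Sym2 (Fin (n + 1)) → Fin r) : Prop :=
  ∀ x y : Fin n, c' s(x.castSucc, y.castSucc) = c s(x, y)

/-- An `r`-edge-coloring of `K_n` is `(r, K_k)`-semisaturated if every one-vertex extension
creates a new monochromatic `K_k` (one through the new vertex). -/
def Semisaturated (r k n : ℕ) (c : Sym2 (Fin n) → Fin r) : Prop :=
  ∀ c' : Sym2 (Fin (n + 1)) → Fin r, ColExtends c c' →
    ∃ i : Fin r, ∃ S : Finset (Fin (n + 1)), S.card = k ∧ Fin.last n ∈ S ∧ IsMonoOn c' i S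

/-- The semisaturation Ramsey number `ssat_r(K_k)`. -/
noncomputable def ssat (r k : ℕ) : ℕ :=
  sInf {n | ∃ c : Sym2 (Fin n) → Fin r, Semisaturated r k n c}

/-- Extend a coloring by one vertex, with `g` giving colors of new edges. -/
def extCol {n R : ℕ} (c : Sym2 (Fin n) → Fin R) (g : Fin n → Fin R) (d : Fin R) :
    Sym2 (Fin (n + 1)) → Fin R :=
  Sym2.lift ⟨fun x y =>
    if hx : (x : ℕ) < n then
      (if hy : (y : ℕ) < n then c s(⟨x, hx⟩, ⟨y, hy⟩) else g ⟨x, hx⟩)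
    else (if hy : (y : ℕ) < n then g ⟨y, hy⟩ else d), by
      intro a b
      dsimp only
      split_ifs <;> simp [Sym2.eq_swap]⟩

lemma extCol_extends {n R : ℕ} (c : Sym2 (Fin n) → Fin R) (g : Fin n → Fin R) (d : Fin R) :
    ColExtends c (extCol c g d) := by
  intro x y
  have hx : ((x.castSucc : Fin (n+1)) : ℕ) < n := x.isLt
  have hy : ((y.castSucc : Fin (n+1)) : ℕ) < n := y.isLt
  simp only [extCol, Sym2.lift_mk, hx, hy, dif_pos]
  simp only [Fin.coe_castSucc, Fin.eta]

lemma extCol_last {n R : ℕ} (c : Sym2 (Fin n) → Fin R) (g : Fin n → Fin R) (d : Fin R)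
    (x : Fin n) : extCol c g d s(x.castSucc, Fin.last n) = g x := by
  have hx : ((x.castSucc : Fin (n+1)) : ℕ) < n := x.isLt
  have hy : ¬ ((Fin.last n : Fin (n+1)) : ℕ) < n := by simp
  simp only [extCol, Sym2.lift_mk, hx, hy, dif_pos, dif_neg, dite_false]
  simp only [Fin.coe_castSucc, Fin.eta]

/-- Map from `Fin (r+1)` colors to `Fin r`, a left inverse of `j.succAbove`. -/
def rho {r : ℕ} (hr : 0 < r) (j : Fin (r + 1)) (i : Fin (r + 1)) : Fin r :=
  if h1 : (i : ℕ) < (j : ℕ) then ⟨i, by have := j.isLt; omega⟩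
  else if h2 : (j : ℕ) < (i : ℕ) then ⟨(i : ℕ) - 1, by have := i.isLt; omega⟩
  else ⟨0, hr⟩

lemma rho_succAbove {r : ℕ} (hr : 0 < r) (j : Fin (r + 1)) (i : Fin r) :
    rho hr j (j.succAbove i) = i := by
  have hdef : j.succAbove i = if i.castSucc < j then i.castSucc else i.succ := rfl
  rcases lt_or_ge (i.castSucc) j with h | h
  · rw [hdef, if_pos h]
    have h' : ((i.castSucc : Fin (r+1)) : ℕ) < (j : ℕ) := h
    simp only [rho, Fin.coe_castSucc] at *
    rw [dif_pos h']
  · rw [hdef, if_neg (not_lt.mpr h)]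
    have h' : (j : ℕ) ≤ (i : ℕ) := h
    have h1 : ¬ ((i.succ : Fin (r+1)) : ℕ) < (j : ℕ) := by simp [Fin.val_succ]; omega
    have h2 : (j : ℕ) < ((i.succ : Fin (r+1)) : ℕ) := by simp [Fin.val_succ]; omega
    simp only [rho, dif_neg h1, dif_pos h2]
    exact Fin.ext (by simp [Fin.val_succ])

/-- Abstract "good" property: for every vertex coloring `f`, some fiber `f⁻¹(i)`
contains a `c`-monochromatic clique of color `i` and size `k-1`. -/
def GoodT (r k : ℕ) (V : Type) (c : Sym2 V → Fin r) : Prop :=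
  ∀ f : V → Fin r, ∃ (i : Fin r) (S : Finset V), S.card = k - 1 ∧ (∀ x ∈ S, f x = i) ∧
    ∀ x ∈ S, ∀ y ∈ S, x ≠ y → c s(x, y) = i

lemma good_base (k : ℕ) : GoodT 1 k (Fin (k - 1)) (fun _ => 0) := by
  intro f
  refine ⟨0, Finset.univ, by simp, fun x _ => Subsingleton.elim _ _, fun x _ y _ _ => rfl⟩

def stepCol {r : ℕ} {V : Type} [DecidableEq V] (c : Sym2 V → Fin (r + 1)) (K : ℕ) :
    Sym2 (Fin K × V) → Fin (r + 2) :=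
  Sym2.lift ⟨fun a b => if a.1 = b.1 then (c s(a.2, b.2)).castSucc else Fin.last (r + 1), by
    intro a b
    dsimp only
    by_cases h : a.1 = b.1
    · rw [if_pos h, if_pos h.symm, Sym2.eq_swap]
    · rw [if_neg h, if_neg (fun h' => h h'.symm)]⟩

lemma good_step {r k : ℕ} {V : Type} [DecidableEq V] (c : Sym2 V → Fin (r + 1))
    (h : GoodT (r + 1) k V c) :
    GoodT (r + 2) k (Fin (k - 1) × V) (stepCol c (k - 1)) := by
  intro f
  by_cases hA : ∀ a : Fin (k - 1), ∃ x : V, f (a, x) = Fin.last (r + 1)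
  · choose φ hφ using hA
    refine ⟨Fin.last (r + 1), Finset.univ.image (fun a => (a, φ a)), ?_, ?_, ?_⟩
    · rw [Finset.card_image_of_injective _ (fun a b hab => (Prod.mk.injEq _ _ _ _ ▸ hab).1)]
      simp
    · intro x hx
      simp only [Finset.mem_image] at hx
      obtain ⟨a, -, rfl⟩ := hx
      exact hφ a
    · intro x hx y hy hxy
      simp only [Finset.mem_image] at hx hy
      obtain ⟨a, -, rfl⟩ := hx
      obtain ⟨b, -, rfl⟩ := hy
      have hab : a ≠ b := fun h' => hxy (by rw [h'])
      show (if a = b then _ else _) = _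
      rw [if_neg hab]
  · push_neg at hA
    obtain ⟨a, ha⟩ := hA
    set f₁ : V → Fin (r + 1) := fun x => (f (a, x)).castPred (ha x) with hf₁
    obtain ⟨i₁, S₁, hc₁, hfib₁, hm₁⟩ := h f₁
    refine ⟨i₁.castSucc, S₁.image (fun x => (a, x)), ?_, ?_, ?_⟩
    · rw [Finset.card_image_of_injective _ (fun x y hxy => (Prod.mk.injEq _ _ _ _ ▸ hxy).2)]
      exact hc₁
    · intro x hx
      simp only [Finset.mem_image] at hx
      obtain ⟨x₀, hx₀, rfl⟩ := hx
      have := hfib₁ x₀ hx₀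
      rw [hf₁] at this
      rw [← this, Fin.castSucc_castPred]
    · intro x hx y hy hxy
      simp only [Finset.mem_image] at hx hy
      obtain ⟨x₀, hx₀, rfl⟩ := hx
      obtain ⟨y₀, hy₀, rfl⟩ := hy
      have hxy₀ : x₀ ≠ y₀ := fun h' => hxy (by rw [h'])
      show (if a = a then (c s(x₀, y₀)).castSucc else _) = _
      rw [if_pos rfl, hm₁ x₀ hx₀ y₀ hy₀ hxy₀]

lemma good_transport {r k N : ℕ} {V : Type} [DecidableEq V] (e : V ≃ Fin N)
    (c : Sym2 V → Fin r) (h : GoodT r k V c) :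
    GoodT r k (Fin N) (fun p => c (p.map e.symm)) := by
  intro f
  obtain ⟨i, S, hc₁, hfib, hm⟩ := h (fun x => f (e x))
  refine ⟨i, S.image e, ?_, ?_, ?_⟩
  · rw [Finset.card_image_of_injective _ e.injective]; exact hc₁
  · intro x hx
    simp only [Finset.mem_image] at hx
    obtain ⟨x₀, hx₀, rfl⟩ := hx
    exact hfib x₀ hx₀
  · intro x hx y hy hxy
    simp only [Finset.mem_image] at hx hy
    obtain ⟨x₀, hx₀, rfl⟩ := hx
    obtain ⟨y₀, hy₀, rfl⟩ := hy
    have hxy₀ : x₀ ≠ y₀ := fun h' => hxy (by rw [h'])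
    show c (Sym2.map e.symm s(e x₀, e y₀)) = i
    rw [Sym2.map_pair_eq, e.symm_apply_apply, e.symm_apply_apply]
    exact hm x₀ hx₀ y₀ hy₀ hxy₀

lemma exists_good (k : ℕ) : ∀ s : ℕ, ∃ (N : ℕ) (c : Sym2 (Fin N) → Fin (s + 1)),
    GoodT (s + 1) k (Fin N) c := by
  intro s
  induction s with
  | zero => exact ⟨k - 1, _, good_base k⟩
  | succ s ih =>
    obtain ⟨N, c, hc⟩ := ih
    refine ⟨(k - 1) * N, _, good_transport finProdFinEquiv _ (good_step c hc)⟩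

lemma good_to_semisat {r k n : ℕ} (hk : 1 ≤ k) (c : Sym2 (Fin n) → Fin r)
    (h : GoodT r k (Fin n) c) : Semisaturated r k n c := by
  intro c' hext
  obtain ⟨i, S₀, hcard, hfib, hm⟩ := h (fun x => c' s(x.castSucc, Fin.last n))
  have hinj : Function.Injective (Fin.castSucc : Fin n → Fin (n + 1)) :=
    Fin.castSucc_injective n
  have hlastnotmem : Fin.last n ∉ S₀.image Fin.castSucc := by
    simp only [Finset.mem_image]
    rintro ⟨x, -, hx⟩
    exact (Fin.castSucc_lt_last x).ne hx
  refine ⟨i, insert (Fin.last n) (S₀.image Fin.castSucc), ?_, Finset.mem_insert_self _ _, ?_⟩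
  · rw [Finset.card_insert_of_notMem hlastnotmem, Finset.card_image_of_injective _ hinj, hcard]
    omega
  · intro x hx y hy hxy
    rw [Finset.mem_insert] at hx hy
    rcases hx with rfl | hx
    · rcases hy with rfl | hy
      · exact absurd rfl hxy
      · simp only [Finset.mem_image] at hy
        obtain ⟨y₀, hy₀, rfl⟩ := hy
        rw [Sym2.eq_swap]
        exact hfib y₀ hy₀
    · simp only [Finset.mem_image] at hx
      obtain ⟨x₀, hx₀, rfl⟩ := hx
      rcases hy with rfl | hy
      · exact hfib x₀ hx₀
      · simp only [Finset.mem_image] at hy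
        obtain ⟨y₀, hy₀, rfl⟩ := hy
        rw [hext]
        exact hm x₀ hx₀ y₀ hy₀ (fun h' => hxy (by rw [h']))

lemma exists_semisat (r k : ℕ) (hr : 1 ≤ r) (hk : 1 ≤ k) :
    {n | ∃ c : Sym2 (Fin n) → Fin r, Semisaturated r k n c}.Nonempty := by
  obtain ⟨s, rfl⟩ : ∃ s, r = s + 1 := ⟨r - 1, by omega⟩
  obtain ⟨N, c, hc⟩ := exists_good k s
  exact ⟨N, c, good_to_semisat hk c hc⟩

lemma ssat_witness (r k : ℕ) (hr : 1 ≤ r) (hk : 1 ≤ k) :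
    ∃ c : Sym2 (Fin (ssat r k)) → Fin r, Semisaturated r k (ssat r k) c :=
  Nat.sInf_mem (exists_semisat r k hr hk)

lemma card_lower {r k n : ℕ} (hr : 1 ≤ r) (c : Sym2 (Fin n) → Fin r)
    (h : Semisaturated r k n c) : k ≤ n + 1 := by
  have j0 : Fin r := ⟨0, hr⟩
  obtain ⟨i, S, hcard, -, -⟩ := h (extCol c (fun _ => j0) j0) (extCol_extends c _ _)
  calc k = S.card := hcard.symm
    _ ≤ Fintype.card (Fin (n + 1)) := Finset.card_le_univ S
    _ = n + 1 := Fintype.card_fin _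

lemma deletion {r k n : ℕ} (hr : 1 ≤ r) (hk : 3 ≤ k) (c : Sym2 (Fin n) → Fin (r + 1))
    (hc : Semisaturated (r + 1) k n c) (j : Fin (r + 1)) (D : Finset (Fin n))
    (hD : ∀ x ∈ D, ∀ y ∈ D, x ≠ y → c s(x, y) ≠ j) :
    ssat r k ≤ n - D.card := by
  classical
  set m := Dᶜ.card with hm
  set F := Dᶜ.orderIsoOfFin hm.symm with hF
  set E : Fin m → Fin n := fun y => (F y : Fin n) with hE
  have hEinj : Function.Injective E := fun a b hab => F.injective (Subtype.ext hab)
  have hEmem : ∀ y, E y ∉ D := fun y => Finset.mem_compl.mp (F y).2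
  have hEsurj : ∀ x : Fin n, x ∉ D → ∃ y, E y = x := by
    intro x hx
    obtain ⟨y, hy⟩ := F.surjective ⟨x, Finset.mem_compl.mpr hx⟩
    exact ⟨y, congrArg Subtype.val hy⟩
  set ct : Sym2 (Fin m) → Fin r := fun p => rho hr j (c (p.map E)) with hct
  have hsemi : Semisaturated r k m ct := by
    intro c₂ hext₂
    set g : Fin n → Fin (r + 1) := fun x =>
      if h : x ∈ D then j
      else j.succAbove (c₂ s(Fin.castSucc (Classical.choose (hEsurj x h)), Fin.last m)) with hg
    obtain ⟨i, S, hcard, hlast, hmono⟩ := hc (extCol c g j) (extCol_extends c g j)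
    have hgval : ∀ x : Fin n, extCol c g j s(x.castSucc, Fin.last n) = g x := extCol_last c g j
    by_cases hij : i = j
    · exfalso
      have hcard' : (S.erase (Fin.last n)).card = k - 1 := by
        rw [Finset.card_erase_of_mem hlast, hcard]
      have h2 : 1 < (S.erase (Fin.last n)).card := by omega
      obtain ⟨u, hu, v, hv, huv⟩ := Finset.one_lt_card.mp h2
      have hune := Finset.ne_of_mem_erase hu
      have hvne := Finset.ne_of_mem_erase hv
      obtain ⟨u₀, rfl⟩ : ∃ u₀ : Fin n, u = u₀.castSucc :=
        ⟨u.castPred hune, (Fin.castSucc_castPred u hune).symm⟩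
      obtain ⟨v₀, rfl⟩ : ∃ v₀ : Fin n, v = v₀.castSucc :=
        ⟨v.castPred hvne, (Fin.castSucc_castPred v hvne).symm⟩
      have memD : ∀ w₀ : Fin n, w₀.castSucc ∈ S.erase (Fin.last n) → w₀ ∈ D := by
        intro w₀ hw
        have h1 := hmono _ (Finset.mem_of_mem_erase hw) _ hlast (Fin.castSucc_lt_last w₀).ne
        rw [hgval w₀] at h1
        by_contra hnd
        rw [hg] at h1
        simp only [dif_neg hnd] at h1
        exact Fin.succAbove_ne j _ (by rw [h1, hij])
      have huD := memD u₀ hu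
      have hvD := memD v₀ hv
      have hne₀ : u₀ ≠ v₀ := fun h' => huv (by rw [h'])
      have h1 := hmono _ (Finset.mem_of_mem_erase hu) _ (Finset.mem_of_mem_erase hv)
        (fun h' => huv h')
      have h2' := extCol_extends c g j u₀ v₀
      exact hD u₀ huD v₀ hvD hne₀ (by rw [← h2', h1, hij])
    · obtain ⟨i', hi'⟩ := Fin.exists_succAbove_eq hij
      have hmem : ∀ u ∈ S.erase (Fin.last n), ∃ y : Fin m,
          u = (E y).castSucc ∧ c₂ s(y.castSucc, Fin.last m) = i' := by
        intro u hu
        have hune := Finset.ne_of_mem_erase hu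
        obtain ⟨u₀, rfl⟩ : ∃ u₀ : Fin n, u = u₀.castSucc :=
          ⟨u.castPred hune, (Fin.castSucc_castPred u hune).symm⟩
        have h1 := hmono _ (Finset.mem_of_mem_erase hu) _ hlast (Fin.castSucc_lt_last u₀).ne
        rw [hgval u₀] at h1
        have hnd : u₀ ∉ D := by
          intro hd
          rw [hg] at h1
          simp only [dif_pos hd] at h1
          exact hij h1.symm
        rw [hg] at h1
        simp only [dif_neg hnd] at h1
        have hEy : E (Classical.choose (hEsurj u₀ hnd)) = u₀ := Classical.choose_spec (hEsurj u₀ hnd)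
        refine ⟨Classical.choose (hEsurj u₀ hnd), by rw [hEy], ?_⟩
        apply Fin.succAbove_right_injective (p := j)
        rw [h1, hi']
      set T : Finset (Fin m) := Finset.univ.filter (fun y => (E y).castSucc ∈ S) with hT
      have hTerase : ∀ y ∈ T, (E y).castSucc ∈ S.erase (Fin.last n) := by
        intro y hy
        rw [hT] at hy
        simp only [Finset.mem_filter] at hy
        exact Finset.mem_erase.mpr ⟨(Fin.castSucc_lt_last (E y)).ne, hy.2⟩
      have hTcard : T.card = k - 1 := by
        rw [show k - 1 = (S.erase (Fin.last n)).card from by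
          rw [Finset.card_erase_of_mem hlast, hcard]]
        refine Finset.card_bij (fun y _ => (E y).castSucc) hTerase ?_ ?_
        · intro a ha b hb hab
          exact hEinj (Fin.castSucc_injective n hab)
        · intro u hu
          obtain ⟨y, hy1, hy2⟩ := hmem u hu
          refine ⟨y, ?_, hy1.symm⟩
          rw [hT]
          simp only [Finset.mem_filter, Finset.mem_univ, true_and]
          rw [← hy1]
          exact Finset.mem_of_mem_erase hu
      have hlastnot : Fin.last m ∉ T.image Fin.castSucc := by
        simp only [Finset.mem_image]
        rintro ⟨y, -, hy⟩
        exact (Fin.castSucc_lt_last y).ne hy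
      have hc₂edge : ∀ y ∈ T, c₂ s(y.castSucc, Fin.last m) = i' := by
        intro y hy
        obtain ⟨y', hy'1, hy'2⟩ := hmem _ (hTerase y hy)
        have : y' = y := hEinj (Fin.castSucc_injective n hy'1.symm)
        rwa [this] at hy'2
      refine ⟨i', insert (Fin.last m) (T.image Fin.castSucc), ?_, Finset.mem_insert_self _ _, ?_⟩
      · rw [Finset.card_insert_of_notMem hlastnot,
          Finset.card_image_of_injective _ (Fin.castSucc_injective m), hTcard]
        omega
      · intro x hx y hy hxy
        rw [Finset.mem_insert] at hx hy
        rcases hx with rfl | hx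
        · rcases hy with rfl | hy
          · exact absurd rfl hxy
          · simp only [Finset.mem_image] at hy
            obtain ⟨y₀, hy₀, rfl⟩ := hy
            rw [Sym2.eq_swap]
            exact hc₂edge y₀ hy₀
        · simp only [Finset.mem_image] at hx
          obtain ⟨x₀, hx₀, rfl⟩ := hx
          rcases hy with rfl | hy
          · exact hc₂edge x₀ hx₀
          · simp only [Finset.mem_image] at hy
            obtain ⟨y₀, hy₀, rfl⟩ := hy
            have hxy₀ : x₀ ≠ y₀ := fun h' => hxy (by rw [h'])
            rw [hext₂ x₀ y₀, hct]
            have hcc : c s(E x₀, E y₀) = i := by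
              rw [← extCol_extends c g j (E x₀) (E y₀)]
              refine hmono _ ?_ _ ?_ ?_
              · exact Finset.mem_of_mem_erase (hTerase x₀ hx₀)
              · exact Finset.mem_of_mem_erase (hTerase y₀ hy₀)
              · exact fun h' => hxy₀ (hEinj (Fin.castSucc_injective n h'))
            simp only [Sym2.map_pair_eq]
            rw [hcc, ← hi', rho_succAbove]
  have hle : ssat r k ≤ m := Nat.sInf_le ⟨ct, hsemi⟩
  have hmn : m = n - D.card := by rw [hm, Finset.card_compl, Fintype.card_fin]
  omega

lemma indep {R n : ℕ} (hn : R + 1 ≤ n) (c : Sym2 (Fin n) → Fin (R + 2)) :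
    ∃ (j : Fin (R + 2)) (D : Finset (Fin n)),
      (∀ x ∈ D, ∀ y ∈ D, x ≠ y → c s(x, y) ≠ j) ∧ R + 2 ≤ 2 * D.card := by
  classical
  obtain ⟨T, -, hTcard⟩ := Finset.exists_subset_card_eq
    (show R + 1 ≤ (Finset.univ : Finset (Fin n)).card by simpa using hn)
  set A := T.offDiag.filter (fun p => p.1 < p.2) with hA
  set B := T.offDiag.filter (fun p => p.2 < p.1) with hB
  have hAsub : A ⊆ T.offDiag := Finset.filter_subset _ _
  have hBsub : B ⊆ T.offDiag := Finset.filter_subset _ _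
  have hABdisj : Disjoint A B := by
    rw [Finset.disjoint_left]
    intro p hp hq
    have h1 := (Finset.mem_filter.mp hp).2
    have h2 := (Finset.mem_filter.mp hq).2
    exact absurd h2 (not_lt.mpr h1.le)
  have hABcard : A.card = B.card := by
    refine Finset.card_bij (fun p _ => (p.2, p.1)) ?_ ?_ ?_
    · intro p hp
      obtain ⟨hp1, hp2⟩ := Finset.mem_filter.mp hp
      obtain ⟨ha, hb, hne⟩ := Finset.mem_offDiag.mp hp1
      exact Finset.mem_filter.mpr ⟨Finset.mem_offDiag.mpr ⟨hb, ha, hne.symm⟩, hp2⟩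
    · intro p _ q _ hpq
      obtain ⟨h1, h2⟩ := Prod.mk.injEq _ _ _ _ ▸ hpq
      exact Prod.ext h2 h1
    · intro q hq
      obtain ⟨hq1, hq2⟩ := Finset.mem_filter.mp hq
      obtain ⟨ha, hb, hne⟩ := Finset.mem_offDiag.mp hq1
      exact ⟨(q.2, q.1), Finset.mem_filter.mpr ⟨Finset.mem_offDiag.mpr ⟨hb, ha, hne.symm⟩, hq2⟩, rfl⟩
  have h2A : 2 * A.card ≤ R * (R + 1) := by
    have hcup : (A ∪ B).card = A.card + B.card := Finset.card_union_of_disjoint hABdisj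
    have hsub : (A ∪ B).card ≤ T.offDiag.card :=
      Finset.card_le_card (Finset.union_subset hAsub hBsub)
    have hoff : T.offDiag.card = (R + 1) * (R + 1) - (R + 1) := by
      rw [Finset.offDiag_card, hTcard]
    have heq : (R + 1) * (R + 1) - (R + 1) = R * (R + 1) := by
      rw [Nat.succ_mul, Nat.add_sub_cancel]
    omega
  have hfib : A.card = ∑ j : Fin (R + 2), (A.filter (fun p => c s(p.1, p.2) = j)).card :=
    Finset.card_eq_sum_card_fiberwise (fun p _ => Finset.mem_univ _)
  obtain ⟨j, hj⟩ : ∃ j : Fin (R + 2),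
      (R + 2) * (A.filter (fun p => c s(p.1, p.2) = j)).card ≤ A.card := by
    by_contra hcon
    push_neg at hcon
    have hsum : ∑ j : Fin (R + 2), (A.card + 1) ≤
        ∑ j : Fin (R + 2), (R + 2) * (A.filter (fun p => c s(p.1, p.2) = j)).card :=
      Finset.sum_le_sum (fun j _ => hcon j)
    rw [← Finset.mul_sum, ← hfib, Finset.sum_const, Finset.card_univ, Fintype.card_fin,
      smul_eq_mul] at hsum
    have := Nat.le_of_mul_le_mul_left hsum (by omega : 0 < R + 2)
    omega
  set t := (A.filter (fun p => c s(p.1, p.2) = j)).card with ht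
  have h2t : 2 * t ≤ R := by
    have h1 : (R + 2) * (2 * t) ≤ (R + 2) * R := by
      calc (R + 2) * (2 * t) = 2 * ((R + 2) * t) := by ring
        _ ≤ 2 * A.card := by omega
        _ ≤ R * (R + 1) := h2A
        _ ≤ R * (R + 2) := Nat.mul_le_mul_left R (by omega)
        _ = (R + 2) * R := Nat.mul_comm _ _
    exact Nat.le_of_mul_le_mul_left h1 (by omega)
  refine ⟨j, T \ (A.filter (fun p => c s(p.1, p.2) = j)).image Prod.fst, ?_, ?_⟩
  · intro x hx y hy hxy hcol
    have hxT := (Finset.mem_sdiff.mp hx).1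
    have hyT := (Finset.mem_sdiff.mp hy).1
    rcases lt_or_gt_of_ne hxy with hlt | hgt
    · have hmem : (x, y) ∈ A.filter (fun p => c s(p.1, p.2) = j) :=
        Finset.mem_filter.mpr ⟨Finset.mem_filter.mpr
          ⟨Finset.mem_offDiag.mpr ⟨hxT, hyT, hxy⟩, hlt⟩, hcol⟩
      exact (Finset.mem_sdiff.mp hx).2 (Finset.mem_image_of_mem Prod.fst hmem)
    · have hmem : (y, x) ∈ A.filter (fun p => c s(p.1, p.2) = j) :=
        Finset.mem_filter.mpr ⟨Finset.mem_filter.mpr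
          ⟨Finset.mem_offDiag.mpr ⟨hyT, hxT, hxy.symm⟩, hgt⟩, by rwa [Sym2.eq_swap]⟩
      exact (Finset.mem_sdiff.mp hy).2 (Finset.mem_image_of_mem Prod.fst hmem)
  · have himg : ((A.filter (fun p => c s(p.1, p.2) = j)).image Prod.fst).card ≤ t :=
      Finset.card_image_le
    have hdiff := Finset.card_le_card_sdiff_add_card
      (s := T) (t := (A.filter (fun p => c s(p.1, p.2) = j)).image Prod.fst)
    omega

lemma lower (k : ℕ) (hk : 3 ≤ k) : ∀ r, 1 ≤ r → k - 2 + r ≤ ssat r k := by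
  refine Nat.le_induction ?_ ?_
  · obtain ⟨c, hc⟩ := ssat_witness 1 k (by omega) (by omega)
    have := card_lower (by omega) c hc
    omega
  · intro r hr ih
    obtain ⟨c, hc⟩ := ssat_witness (r + 1) k (by omega) (by omega)
    have hlb := card_lower (by omega) c hc
    have hpos : 0 < ssat (r + 1) k := by omega
    set v : Fin (ssat (r + 1) k) := ⟨0, hpos⟩ with hv
    have hdel := deletion hr hk c hc ⟨0, by omega⟩ {v} ?_
    · have hone : ({v} : Finset (Fin (ssat (r + 1) k))).card = 1 := Finset.card_singleton v
      rw [hone] at hdel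
      omega
    · intro x hx y hy hxy
      rw [Finset.mem_singleton] at hx hy
      exact absurd (hx.trans hy.symm) hxy

theorem stmt8 (r k : ℕ) (hr : 2 ≤ r) (hk : 3 ≤ k) :
    (ssat (r - 1) k : ℝ) + r / 2 ≤ (ssat r k : ℝ) := by
  obtain ⟨m, rfl⟩ : ∃ m, r = m + 2 := ⟨r - 2, by omega⟩
  obtain ⟨c, hc⟩ := ssat_witness (m + 2) k (by omega) (by omega)
  have hN := lower k hk (m + 2) (by omega)
  obtain ⟨j, D, hD, hDcard⟩ := indep (R := m) (by omega) c
  have hdel := deletion (r := m + 1) (by omega) hk c hc j D hD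
  have hDle : D.card ≤ ssat (m + 2) k := by
    calc D.card ≤ (Finset.univ : Finset (Fin (ssat (m + 2) k))).card := Finset.card_le_univ D
      _ = ssat (m + 2) k := by simp
  have hkey : ssat (m + 1) k + D.card ≤ ssat (m + 2) k := by omega
  have hsub : m + 2 - 1 = m + 1 := by omega
  rw [hsub]
  have h1 : (ssat (m + 1) k : ℝ) + (D.card : ℝ) ≤ (ssat (m + 2) k : ℝ) := by
    exact_mod_cast hkey
  have h2 : ((m : ℝ) + 2) ≤ 2 * (D.card : ℝ) := by exact_mod_cast hDcard
  push_cast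
  linarith
end

section
/- Let k ≥ 3 and s ≥ r ≥ 2, and let G_1,…,G_s be pairwise edge-disjoint subgraphs of the complete graph on vertex set V such that for every i ∈ [s] and every subset U ⊆ V with |U| ≥ |V|/r, the induced graph G_i[U] contains a copy of K_{k-1}. Then ssat_r(K_k) ≤ |V|. -/
theorem stmt10 {V : Type*} [Fintype V] [DecidableEq V] (k m r : ℕ) (hk : 3 ≤ k)
    (hr : 2 ≤ r) (hm : r ≤ m) (G : Fin m → SimpleGraph V)
    (hdisj : ∀ i j : Fin m, i ≠ j → ∀ x y : V, ¬((G i).Adj x y ∧ (G j).Adj x y))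
    (hcl : ∀ i : Fin m, ∀ U : Finset V, (Fintype.card V : ℝ) / r ≤ U.card →
      ∃ S ⊆ U, (G i).IsNClique (k - 1) S) :
    ssat r k ≤ Fintype.card V := by
  classical
  set n := Fintype.card V with hn
  have hrpos : 0 < r := by omega
  let e : V ≃ Fin n := Fintype.equivFin V
  -- the pulled-back graphs, indexed by colors
  let H : Fin r → SimpleGraph (Fin n) := fun i =>
    (G (Fin.castLE hm i)).comap (e.symm : Fin n → V)
  -- uniqueness of the graph containing a given edge
  have huniq : ∀ (i j : Fin r) (x y : Fin n), (H i).Adj x y → (H j).Adj x y → i = j := by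
    intro i j x y hi hj
    by_contra hij
    exact hdisj (Fin.castLE hm i) (Fin.castLE hm j)
      (fun h => hij (Fin.castLE_injective hm h)) (e.symm x) (e.symm y) ⟨hi, hj⟩
  -- the coloring
  let c : Sym2 (Fin n) → Fin r := fun p =>
    if h : ∃ i : Fin r, p ∈ (H i).edgeSet then h.choose else ⟨0, hrpos⟩
  have hc : ∀ (i : Fin r) (x y : Fin n), (H i).Adj x y → c s(x, y) = i := by
    intro i x y hadj
    have h : ∃ j : Fin r, s(x, y) ∈ (H j).edgeSet := ⟨i, hadj⟩
    have : c s(x, y) = h.choose := by simp only [c, dif_pos h]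
    rw [this]
    exact huniq _ _ x y h.choose_spec hadj
  apply Nat.sInf_le
  refine ⟨c, ?_⟩
  intro c' hext
  -- color of edges to the new vertex
  let f : Fin n → Fin r := fun x => c' s(x.castSucc, Fin.last n)
  let U : Fin r → Finset (Fin n) := fun i => Finset.univ.filter fun x => f x = i
  -- pigeonhole: some color class has at least n / r vertices
  have hsum : (n : ℝ) = ∑ i : Fin r, ((U i).card : ℝ) := by
    have := Finset.card_eq_sum_card_fiberwise
      (f := f) (s := (Finset.univ : Finset (Fin n))) (t := Finset.univ)
      (fun x _ => Finset.mem_univ _)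
    rw [Finset.card_univ, Fintype.card_fin] at this
    exact_mod_cast this
  have hpig : ∃ i : Fin r, (n : ℝ) / r ≤ (U i).card := by
    by_contra hcon
    push_neg at hcon
    have : ∑ i : Fin r, ((U i).card : ℝ) < ∑ _i : Fin r, (n : ℝ) / r := by
      apply Finset.sum_lt_sum_of_nonempty
      · exact ⟨⟨0, hrpos⟩, Finset.mem_univ _⟩
      · intro i _; exact hcon i
    rw [Finset.sum_const, Finset.card_univ, Fintype.card_fin, nsmul_eq_mul,
      mul_div_cancel₀] at this
    · rw [← hsum] at this; exact lt_irrefl _ this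
    · exact_mod_cast hrpos.ne'
  obtain ⟨i, hi⟩ := hpig
  -- find a clique in that class
  have hcard' : ((Finset.image e.symm (U i)).card : ℝ) = (U i).card := by
    rw [Finset.card_image_of_injective _ e.symm.injective]
  obtain ⟨S, hSU, hSclique⟩ := hcl (Fin.castLE hm i) (Finset.image e.symm (U i))
    (by rw [hcard']; exact hi)
  let T : Finset (Fin n) := S.image e
  have hTU : ∀ x ∈ T, f x = i := by
    intro x hx
    obtain ⟨v, hv, rfl⟩ := Finset.mem_image.mp hx
    obtain ⟨u, hu, rfl⟩ := Finset.mem_image.mp (hSU hv)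
    rw [Equiv.apply_symm_apply]
    exact (Finset.mem_filter.mp hu).2
  have hTmono : ∀ x ∈ T, ∀ y ∈ T, x ≠ y → c s(x, y) = i := by
    intro x hx y hy hxy
    obtain ⟨u, hu, rfl⟩ := Finset.mem_image.mp hx
    obtain ⟨v, hv, rfl⟩ := Finset.mem_image.mp hy
    have huv : u ≠ v := fun h => hxy (by rw [h])
    have hadj : (H i).Adj (e u) (e v) := by
      show (G (Fin.castLE hm i)).Adj (e.symm (e u)) (e.symm (e v))
      rw [Equiv.symm_apply_apply, Equiv.symm_apply_apply]
      exact hSclique.1 hu hv huv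
    exact hc i _ _ hadj
  -- assemble the monochromatic K_k
  refine ⟨i, insert (Fin.last n) (T.image Fin.castSucc), ?_, Finset.mem_insert_self _ _, ?_⟩
  · have hnotmem : Fin.last n ∉ T.image Fin.castSucc := by
      intro h
      obtain ⟨x, _, hx⟩ := Finset.mem_image.mp h
      exact (Fin.castSucc_lt_last x).ne hx
    rw [Finset.card_insert_of_notMem hnotmem,
      Finset.card_image_of_injective _ (Fin.castSucc_injective n),
      Finset.card_image_of_injective _ e.injective, hSclique.2]
    omega
  · intro x hx y hy hxy
    rcases Finset.mem_insert.mp hx with rfl | hx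
    · rcases Finset.mem_insert.mp hy with rfl | hy
      · exact absurd rfl hxy
      · obtain ⟨b, hb, rfl⟩ := Finset.mem_image.mp hy
        rw [Sym2.eq_swap]
        exact hTU b hb
    · obtain ⟨a, ha, rfl⟩ := Finset.mem_image.mp hx
      rcases Finset.mem_insert.mp hy with rfl | hy
      · exact hTU a ha
      · obtain ⟨b, hb, rfl⟩ := Finset.mem_image.mp hy
        have hab : a ≠ b := fun h => hxy (by rw [h])
        rw [hext a b]
        exact hTmono a ha b hb hab
end

section
/- For every fixed r ≥ 2 there is a constant C_r such that ssat_r(K_k) ≤ C_r · k² for all k; together with the lower bound (r-1)k² - (3r-4)k + (2r-3) ≤ ssat_r(K_k), this gives ssat_r(K_k) = Θ(k²) for fixed r. -/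
/-!
Adding a vertex whose edges are coloured by `f : Fin n → Fin r` shows that a colouring is
`(r, K_{s+1})`-semisaturated exactly when every vertex colouring `f` admits an `s`-set that is
monochromatic of some colour `i` and on which `f ≡ i`.

Upper bound: on the affine plane over `𝔽_q`, colour an edge by the slope of its line reduced
mod `r`. For `q > rk` a colour class `i` of `f` has more than `q(k-2)` points, so `k-1` of them lie
on one of the `q` parallel lines of slope `i`. Bertrand's postulate supplies such a `q ≤ 2rk`.

Lower bound: fix a colour `j`; for each other colour `a`, take `k-2` times greedily a largest set
of unused vertices spanning no edge of colour `a` and give it colour `a`; give colour `j` to the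
rest. A witness set of colour `a ≠ j` meets each of the `k-2` sets of colour `a` at most once, so
the witness has colour `j`. It spans no edge of any other colour, so by maximality each of the
`(r-1)(k-2)` greedy sets has at least `k-1` vertices, whence `n ≥ (k-1)((r-1)(k-2)+1)`.
-/

open Finset

section

variable {α κ : Type*}

def ForcesMonoSet (c : Sym2 α → κ) (s : ℕ) : Prop :=
  ∀ f : α → κ, ∃ i S, #S = s ∧ (∀ x ∈ S, f x = i) ∧
    (S : Set α).Pairwise fun x y ↦ c s(x, y) = i

theorem ForcesMonoSet.comp_map_equiv {β : Type*} {c : Sym2 β → κ} {s : ℕ}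
    (h : ForcesMonoSet c s) (e : α ≃ β) : ForcesMonoSet (c ∘ Sym2.map e) s := by
  intro f
  obtain ⟨i, S, hcard, hf, hmono⟩ := h (f ∘ e.symm)
  refine ⟨i, S.map e.symm.toEmbedding, by simpa using hcard, fun x hx ↦ ?_, ?_⟩
  · obtain ⟨y, hy, rfl⟩ := mem_map.1 hx
    simpa using hf y hy
  rw [coe_map, e.symm.toEmbedding.injective.injOn.pairwise_image]
  exact hmono.imp fun x y h ↦ by simpa [Function.onFun] using h

theorem exists_max_card_subset (p : Finset α → Prop) (h₀ : p ∅) (U : Finset α) :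
    ∃ X ⊆ U, p X ∧ ∀ Y ⊆ U, p Y → #Y ≤ #X := by
  classical
  obtain ⟨X, hX, hmax⟩ :=
    exists_max_image {X ∈ U.powerset | p X} card ⟨∅, by simpa using h₀⟩
  simp only [mem_filter, mem_powerset] at hX hmax
  exact ⟨X, hX.1, hX.2, fun Y hYU hY ↦ hmax Y ⟨hYU, hY⟩⟩

/-- `M` lists the colours of the greedy rounds. -/
theorem exists_vertexColoring_card_le [DecidableEq κ] (c : Sym2 α → κ) (j : κ)
    (M : Multiset κ) (hj : j ∉ M) (U : Finset α) :
    ∃ f : α → κ, ∀ i (S : Finset α), S ⊆ U → (∀ x ∈ S, f x = i) →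
      (S : Set α).Pairwise (fun x y ↦ c s(x, y) = i) →
      #S ≤ M.count i ∨ (i = j ∧ (Multiset.card M + 1) * #S ≤ #U) := by
  classical
  induction M using Multiset.induction_on generalizing U with
  | empty =>
    refine ⟨fun _ ↦ j, fun i S hSU hf _ ↦ ?_⟩
    obtain rfl | ⟨x, hx⟩ := S.eq_empty_or_nonempty
    · simp
    · exact Or.inr ⟨(hf x hx).symm, by simpa using card_le_card hSU⟩
  | cons a M ih =>
    obtain ⟨hja, hjM⟩ : j ≠ a ∧ j ∉ M := by simpa [not_or] using hj
    obtain ⟨X, hXU, hXfree, hXmax⟩ := exists_max_card_subset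
      (fun X : Finset α ↦ (X : Set α).Pairwise fun x y ↦ c s(x, y) ≠ a) (by simp) U
    obtain ⟨f, hf⟩ := ih hjM (U \ X)
    refine ⟨fun x ↦ if x ∈ X then a else f x, fun i S hSU hSf hSmono ↦ ?_⟩
    by_cases hia : i = a
    · subst hia
      have hinter : #(S ∩ X) ≤ 1 := card_le_one.2 fun x hx y hy ↦ by
        by_contra hxy
        simp only [mem_inter] at hx hy
        exact hXfree hx.2 hy.2 hxy (hSmono hx.1 hy.1 hxy)
      obtain hsdiff | ⟨rfl, -⟩ := hf i (S \ X) (sdiff_subset_sdiff hSU le_rfl)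
        (fun x hx ↦ by simpa [(mem_sdiff.1 hx).2] using hSf x (mem_sdiff.1 hx).1)
        (hSmono.mono sdiff_subset)
      · have hsplit := card_inter_add_card_sdiff S X
        rw [Multiset.count_cons_self]
        omega
      · exact absurd rfl hja
    · have hSX : S ⊆ U \ X := fun x hx ↦ mem_sdiff.2 ⟨hSU hx, fun hxX ↦ hia <| by
        simpa [hxX] using (hSf x hx).symm⟩
      have hSfree : (S : Set α).Pairwise fun x y ↦ c s(x, y) ≠ a :=
        hSmono.imp fun x y h ↦ by rwa [h]
      rcases hf i S hSX (fun x hx ↦ by simpa [(mem_sdiff.1 (hSX hx)).2] using hSf x hx) hSmono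
        with hcount | ⟨rfl, hcard⟩
      · exact Or.inl (by rwa [Multiset.count_cons_of_ne hia])
      · refine Or.inr ⟨rfl, ?_⟩
        have hSX_le := hXmax S (hSX.trans sdiff_subset) hSfree
        have hUX := card_sdiff_of_subset hXU
        have hXU_le := card_le_card hXU
        simp only [Multiset.card_cons, add_one_mul (Multiset.card M + 1)]
        omega

theorem ForcesMonoSet.le_card [Fintype α] [Fintype κ] [Nonempty κ] {c : Sym2 α → κ} {s : ℕ}
    (h : ForcesMonoSet c s) : s * ((Fintype.card κ - 1) * (s - 1) + 1) ≤ Fintype.card α := by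
  classical
  obtain ⟨j⟩ := ‹Nonempty κ›
  set M : Multiset κ := (s - 1) • (univ.erase j).val
  obtain ⟨f, hf⟩ :=
    exists_vertexColoring_card_le c j M (by rw [Multiset.mem_nsmul, mem_val]; simp) univ
  obtain ⟨i, S, rfl, hSf, hSmono⟩ := h f
  rcases hf i S (subset_univ S) hSf hSmono with hcount | ⟨-, hcard⟩
  · have hcount_le : M.count i ≤ #S - 1 := by
      simpa [M, Multiset.count_nsmul] using
        Nat.mul_le_mul_left (#S - 1) (Multiset.nodup_iff_count_le_one.1 (univ.erase j).nodup i)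
    have hS : #S = 0 := by omega
    simp [hS]
  · simpa [M, Multiset.card_nsmul, mul_comm] using hcard

end

section

variable {n : ℕ} {κ : Type*}

/-- `i₀` colours the loop `s(last n, last n)`, which no clique uses. -/
def extendColoring (c : Sym2 (Fin n) → κ) (f : Fin n → κ) (i₀ : κ) :
    Sym2 (Fin (n + 1)) → κ :=
  Sym2.lift ⟨fun x y ↦ Fin.lastCases (Fin.lastCases i₀ f y)
    (fun a ↦ Fin.lastCases (f a) (fun b ↦ c s(a, b)) y) x, by
    intro x y
    cases x using Fin.lastCases <;> cases y using Fin.lastCases <;> simp [Sym2.eq_swap]⟩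

@[simp]
theorem extendColoring_castSucc_castSucc (c : Sym2 (Fin n) → κ) (f : Fin n → κ) (i₀ : κ)
    (a b : Fin n) : extendColoring c f i₀ s(a.castSucc, b.castSucc) = c s(a, b) := by
  simp [extendColoring]

@[simp]
theorem extendColoring_castSucc_last (c : Sym2 (Fin n) → κ) (f : Fin n → κ) (i₀ : κ)
    (a : Fin n) : extendColoring c f i₀ s(a.castSucc, Fin.last n) = f a := by
  simp [extendColoring]

theorem map_castSuccEmb_preimage (T : Finset (Fin (n + 1))) :
    (T.preimage Fin.castSucc (Fin.castSucc_injective n).injOn).map Fin.castSuccEmb =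
      T.erase (Fin.last n) := by
  ext x
  cases x using Fin.lastCases <;> simp [Fin.castSucc_ne_last]

theorem pairwise_insert_last_map_iff {c' : Sym2 (Fin (n + 1)) → κ} {i : κ} {S : Finset (Fin n)} :
    ((insert (Fin.last n) (S.map Fin.castSuccEmb) : Finset _) : Set (Fin (n + 1))).Pairwise
        (fun x y ↦ c' s(x, y) = i) ↔
      (S : Set (Fin n)).Pairwise (fun a b ↦ c' s(a.castSucc, b.castSucc) = i) ∧
        ∀ a ∈ S, c' s(a.castSucc, Fin.last n) = i := by
  rw [coe_insert, coe_map, Set.pairwise_insert, Fin.castSuccEmb.injective.injOn.pairwise_image]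
  simp [Sym2.eq_swap (a := Fin.last n), (Fin.castSucc_ne_last _).symm]

theorem semisaturated_iff_forcesMonoSet {r s : ℕ} (hr : 0 < r) {c : Sym2 (Fin n) → Fin r} :
    Semisaturated r (s + 1) n c ↔ ForcesMonoSet c s := by
  constructor
  · intro hc f
    obtain ⟨i, T, hTcard, hlast, hTmono⟩ :=
      hc (extendColoring c f ⟨0, hr⟩) fun a b ↦ extendColoring_castSucc_castSucc ..
    set S := T.preimage Fin.castSucc (Fin.castSucc_injective n).injOn
    have hT : T = insert (Fin.last n) (S.map Fin.castSuccEmb) := by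
      rw [map_castSuccEmb_preimage, insert_erase hlast]
    have hScard : #S = s := by
      simpa [card_erase_of_mem hlast, hTcard] using congrArg card (map_castSuccEmb_preimage T)
    obtain ⟨hSmono, hSf⟩ := pairwise_insert_last_map_iff.1 (hT ▸ hTmono)
    exact ⟨i, S, hScard, by simpa using hSf, by simpa using hSmono⟩
  · intro hc c' hext
    obtain ⟨i, S, hScard, hSf, hSmono⟩ := hc fun a ↦ c' s(a.castSucc, Fin.last n)
    refine ⟨i, insert (Fin.last n) (S.map Fin.castSuccEmb), ?_, mem_insert_self _ _, ?_⟩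
    · rw [card_insert_of_notMem (by simp [Fin.castSucc_ne_last]), card_map, hScard]
    · exact pairwise_insert_last_map_iff.2 ⟨hSmono.imp fun a b h ↦ (hext a b).trans h, hSf⟩

end

section

variable {F κ : Type*} [Field F]

def lineSlope (x y : F × F) : F := (y.2 - x.2) / (y.1 - x.1)

theorem lineSlope_comm (x y : F × F) : lineSlope x y = lineSlope y x := by
  rw [lineSlope, lineSlope, ← neg_sub, ← neg_sub x.1, neg_div_neg_eq]

theorem lineSlope_eq_of_sub_mul_eq {m : F} {x y : F × F} (hxy : x ≠ y)
    (h : x.2 - m * x.1 = y.2 - m * y.1) : lineSlope x y = m := by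
  have h₁ : y.1 - x.1 ≠ 0 := fun h₁ ↦ hxy <| Prod.ext (by linear_combination -h₁)
    (by linear_combination h - m * h₁)
  rw [lineSlope, div_eq_iff h₁]
  linear_combination -h

def slopeColoring (g : F → κ) : Sym2 (F × F) → κ :=
  Sym2.lift ⟨fun x y ↦ g (lineSlope x y), fun x y ↦ congrArg g (lineSlope_comm x y)⟩

theorem forcesMonoSet_slopeColoring [Fintype F] [Fintype κ] {g : F → κ} (hg : g.Surjective)
    {s : ℕ} (hs : Fintype.card κ * (s - 1) < Fintype.card F) :
    ForcesMonoSet (slopeColoring g) s := by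
  classical
  intro f
  have hF : 0 < Fintype.card F := Fintype.card_pos
  obtain ⟨i, hi⟩ := Fintype.exists_lt_card_fiber_of_mul_lt_card (f := f)
    (n := Fintype.card F * (s - 1)) <| by
      rw [Fintype.card_prod, mul_left_comm]
      exact Nat.mul_lt_mul_of_pos_left hs hF
  obtain ⟨m, rfl⟩ := hg i
  obtain ⟨b, -, hb⟩ := exists_lt_card_fiber_of_mul_lt_card_of_maps_to
    (f := fun p : F × F ↦ p.2 - m * p.1) (t := univ) (n := s - 1) (fun _ _ ↦ mem_univ _)
    (by simpa using hi)
  obtain ⟨S, hSsub, hScard⟩ := exists_subset_card_eq (Nat.le_of_pred_lt hb)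
  have hS : ∀ x ∈ S, f x = g m ∧ x.2 - m * x.1 = b := fun x hx ↦ by
    simpa using hSsub hx
  refine ⟨g m, S, hScard, fun x hx ↦ (hS x hx).1, fun x hx y hy hxy ↦ ?_⟩
  change g (lineSlope x y) = g m
  rw [lineSlope_eq_of_sub_mul_eq hxy ((hS x hx).2.trans (hS y hy).2.symm)]

end

theorem exists_semisaturated_of_prime {r s q : ℕ} (hr : 0 < r) (hq : q.Prime)
    (hrq : r * (s + 1) < q) :
    ∃ c : Sym2 (Fin (q * q)) → Fin r, Semisaturated r (s + 1) (q * q) c := by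
  have := Fact.mk hq
  let g : ZMod q → Fin r := fun a ↦ ⟨a.val % r, Nat.mod_lt _ hr⟩
  have hrq' : r ≤ q := by nlinarith
  have hg : g.Surjective := fun i ↦ ⟨i.val, Fin.ext <| by
    simp [g, ZMod.val_natCast, Nat.mod_eq_of_lt i.isLt, Nat.mod_eq_of_lt (i.isLt.trans_le hrq')]⟩
  let e : Fin (q * q) ≃ ZMod q × ZMod q :=
    (Fintype.equivFinOfCardEq (by simp [ZMod.card] : Fintype.card (ZMod q × ZMod q) = q * q)).symm
  have hs : Fintype.card (Fin r) * (s - 1) < Fintype.card (ZMod q) := by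
    simp only [Fintype.card_fin, ZMod.card]
    exact lt_of_le_of_lt (Nat.mul_le_mul_left r (by omega)) hrq
  exact ⟨_, (semisaturated_iff_forcesMonoSet hr).2
    ((forcesMonoSet_slopeColoring hg hs).comp_map_equiv e)⟩

theorem exists_semisaturated_le {r : ℕ} (hr : 0 < r) (s : ℕ) :
    ∃ n ≤ 4 * r ^ 2 * (s + 1) ^ 2, ∃ c : Sym2 (Fin n) → Fin r, Semisaturated r (s + 1) n c := by
  obtain ⟨q, hq, hrq, hq2⟩ := Nat.bertrand (r * (s + 1)) (by positivity)
  refine ⟨q * q, ?_, exists_semisaturated_of_prime hr hq hrq⟩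
  calc q * q ≤ (2 * (r * (s + 1))) * (2 * (r * (s + 1))) := Nat.mul_le_mul hq2 hq2
    _ = 4 * r ^ 2 * (s + 1) ^ 2 := by ring

theorem ssat_le {r k n : ℕ} {c : Sym2 (Fin n) → Fin r} (hc : Semisaturated r k n c) :
    ssat r k ≤ n :=
  Nat.sInf_le (show n ∈ {n | ∃ c : Sym2 (Fin n) → Fin r, Semisaturated r k n c} from ⟨c, hc⟩)

theorem exists_semisaturated_ssat {r k n : ℕ} {c : Sym2 (Fin n) → Fin r}
    (hc : Semisaturated r k n c) : ∃ c' : Sym2 (Fin (ssat r k)) → Fin r,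
      Semisaturated r k (ssat r k) c' :=
  Nat.sInf_mem (s := {n | ∃ c : Sym2 (Fin n) → Fin r, Semisaturated r k n c}) ⟨n, c, hc⟩

theorem le_ssat {r s n : ℕ} (hr : 0 < r) {c : Sym2 (Fin n) → Fin r}
    (hc : Semisaturated r (s + 1) n c) : s * ((r - 1) * (s - 1) + 1) ≤ ssat r (s + 1) := by
  have : NeZero r := ⟨hr.ne'⟩
  obtain ⟨c', hc'⟩ := exists_semisaturated_ssat hc
  simpa using ((semisaturated_iff_forcesMonoSet hr).1 hc').le_card

theorem stmt11 (r : ℕ) (hr : 2 ≤ r) :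
    (∃ C : ℝ, 0 < C ∧ ∀ k : ℕ, 3 ≤ k → (ssat r k : ℝ) ≤ C * (k : ℝ) ^ 2) ∧
    (∀ k : ℕ, 3 ≤ k →
      ((r : ℝ) - 1) * (k : ℝ) ^ 2 - (3 * (r : ℝ) - 4) * k + (2 * (r : ℝ) - 3) ≤
        (ssat r k : ℝ)) := by
  have hr₀ : 0 < r := by omega
  refine ⟨⟨4 * r ^ 2, by positivity, fun k hk ↦ ?_⟩, fun k hk ↦ ?_⟩ <;>
    obtain ⟨s, rfl⟩ : ∃ s, k = s + 1 := ⟨k - 1, by omega⟩ <;>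
    obtain ⟨n, hn, c, hc⟩ := exists_semisaturated_le hr₀ s
  · exact_mod_cast (ssat_le hc).trans hn
  · have hle : ((s * ((r - 1) * (s - 1) + 1) : ℕ) : ℝ) ≤ ssat r (s + 1) :=
      mod_cast le_ssat hr₀ hc
    push_cast [Nat.cast_sub (by omega : 1 ≤ r), Nat.cast_sub (by omega : 1 ≤ s)] at hle ⊢
    linarith
end

section
/- For every k ≥ 2 and r ≥ 3, ssat_r(K_k) ≤ 8k³r³. -/
lemma core_ssat (k r q : ℕ) (hk : 2 ≤ k) (hr : 1 ≤ r) (hq : q.Prime) (hkr : k * r ≤ q) :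
    ∃ c : Sym2 (Fin (q ^ 3)) → Fin r,
      ∀ c' : Sym2 (Fin (q ^ 3 + 1)) → Fin r,
        (∀ x y : Fin (q ^ 3), c' s(x.castSucc, y.castSucc) = c s(x, y)) →
        ∃ i : Fin r, ∃ S : Finset (Fin (q ^ 3 + 1)), S.card = k ∧ Fin.last (q ^ 3) ∈ S ∧
          ∀ x ∈ S, ∀ y ∈ S, x ≠ y → c' s(x, y) = i := by
  haveI : Fact q.Prime := ⟨hq⟩
  have hr0 : 0 < r := hr
  have hrq : r < q := by nlinarith [hq.two_le]
  have hcard : Fintype.card (ZMod q × ZMod q × ZMod q) = q ^ 3 := by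
    rw [Fintype.card_prod, Fintype.card_prod, ZMod.card]; ring
  let e : (ZMod q × ZMod q × ZMod q) ≃ Fin (q ^ 3) := Fintype.equivFinOfCardEq hcard
  let φ : ZMod q → Fin r := fun x => ⟨x.val % r, Nat.mod_lt _ hr0⟩
  let col : (ZMod q × ZMod q × ZMod q) → (ZMod q × ZMod q × ZMod q) → Fin r :=
    fun u v => φ ((v.2.1 - u.2.1) * (v.1 - u.1)⁻¹)
  have hcolsymm : ∀ u v, col u v = col v u := by
    intro u v
    show φ _ = φ _
    congr 1
    rw [← neg_sub v.2.1, ← neg_sub v.1, inv_neg, neg_mul_neg]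
  refine ⟨Sym2.lift ⟨fun x y => col (e.symm x) (e.symm y), fun x y => hcolsymm _ _⟩, ?_⟩
  intro c' hext
  set f : (ZMod q × ZMod q × ZMod q) → Fin r := fun p => c' s(Fin.castSucc (e p), Fin.last (q ^ 3)) with hf
  -- pigeonhole 1
  obtain ⟨i, -, hi⟩ := Finset.exists_le_card_fiber_of_mul_le_card_of_maps_to
    (f := f) (s := Finset.univ) (t := Finset.univ) (n := k * q ^ 2)
    (fun a _ => Finset.mem_univ _) ⟨⟨0, hr0⟩, Finset.mem_univ _⟩
    (by
      simp only [Finset.card_univ, hcard, Fintype.card_fin]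
      calc r * (k * q ^ 2) = (k * r) * q ^ 2 := by ring
        _ ≤ q * q ^ 2 := by exact Nat.mul_le_mul_right _ hkr
        _ = q ^ 3 := by ring)
  set A : Finset (ZMod q × ZMod q × ZMod q) := {p ∈ (Finset.univ : Finset (ZMod q × ZMod q × ZMod q)) | f p = i} with hA
  set lam : ZMod q := (i.val : ZMod q) with hlam
  have hφlam : φ lam = i := by
    have h1 : lam.val = i.val := ZMod.val_natCast_of_lt (lt_trans i.isLt hrq)
    apply Fin.ext
    show lam.val % r = i.val
    rw [h1, Nat.mod_eq_of_lt i.isLt]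
  -- pigeonhole 2 : lines
  let h : ZMod q × (ZMod q × ZMod q × ZMod q) → ZMod q × ZMod q × ZMod q :=
    fun mp => (mp.1, mp.2.2.1 - lam * mp.2.1, mp.2.2.2 - mp.1 * mp.2.1)
  obtain ⟨ℓ, -, hℓ⟩ := Finset.exists_le_card_fiber_of_mul_le_card_of_maps_to
    (f := h) (s := (Finset.univ : Finset (ZMod q)) ×ˢ A) (t := Finset.univ) (n := k)
    (fun a _ => Finset.mem_univ _) ⟨(0, 0, 0), Finset.mem_univ _⟩
    (by
      rw [Finset.card_product, Finset.card_univ, Finset.card_univ, hcard, ZMod.card]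
      calc q ^ 3 * k = q * (k * q ^ 2) := by ring
        _ ≤ q * A.card := Nat.mul_le_mul_left _ hi)
  set Fib := {x ∈ (Finset.univ : Finset (ZMod q)) ×ˢ A | h x = ℓ} with hFib
  set T₀ : Finset (ZMod q × ZMod q × ZMod q) := Fib.image Prod.snd with hT₀
  have hT₀card : k ≤ T₀.card := by
    rw [hT₀, Finset.card_image_of_injOn]
    · exact hℓ
    · intro a ha b hb hab
      simp only [hFib, Finset.coe_filter, Set.mem_setOf_eq] at ha hb
      have h1 : a.1 = ℓ.1 := congrArg Prod.fst ha.2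
      have h2 : b.1 = ℓ.1 := congrArg Prod.fst hb.2
      exact Prod.ext (h1.trans h2.symm) hab
  -- properties of points in T₀
  have hT₀f : ∀ p ∈ T₀, f p = i := by
    intro p hp
    rw [hT₀] at hp
    obtain ⟨mp, hmp, rfl⟩ := Finset.mem_image.mp hp
    rw [hFib] at hmp
    have := (Finset.mem_filter.mp hmp).1
    have := (Finset.mem_product.mp this).2
    rw [hA] at this
    exact (Finset.mem_filter.mp this).2
  have hT₀line : ∀ p ∈ T₀, p.2.1 - lam * p.1 = ℓ.2.1 ∧ p.2.2 - ℓ.1 * p.1 = ℓ.2.2 := by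
    intro p hp
    rw [hT₀] at hp
    obtain ⟨mp, hmp, rfl⟩ := Finset.mem_image.mp hp
    rw [hFib] at hmp
    have h2 := (Finset.mem_filter.mp hmp).2
    have h1 : mp.1 = ℓ.1 := congrArg Prod.fst h2
    have h3 := congrArg (Prod.fst ∘ Prod.snd) h2
    have h4 := congrArg (Prod.snd ∘ Prod.snd) h2
    simp only [Function.comp, h] at h3 h4
    exact ⟨h3, by rw [← h1]; exact h4⟩
  have hT₀col : ∀ p ∈ T₀, ∀ p' ∈ T₀, p ≠ p' → col p p' = i := by
    intro p hp p' hp' hne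
    obtain ⟨hl1, hl2⟩ := hT₀line p hp
    obtain ⟨hl1', hl2'⟩ := hT₀line p' hp'
    have hx : p.1 ≠ p'.1 := by
      intro hxx
      apply hne
      have e2 : p.2.1 = p'.2.1 := by
        have := hl1.trans hl1'.symm
        rw [hxx] at this
        linear_combination this
      have e3 : p.2.2 = p'.2.2 := by
        have := hl2.trans hl2'.symm
        rw [hxx] at this
        linear_combination this
      exact Prod.ext hxx (Prod.ext e2 e3)
    have hslope : p'.2.1 - p.2.1 = lam * (p'.1 - p.1) := by
      have := hl1.trans hl1'.symm
      linear_combination -this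
    show φ _ = i
    rw [hslope, mul_assoc, mul_inv_cancel₀ (sub_ne_zero.mpr (Ne.symm hx)), mul_one, hφlam]
  -- choose T of size k - 1
  obtain ⟨T, hTsub, hTcard⟩ := Finset.exists_subset_card_eq (le_trans (show k-1 ≤ k by omega) hT₀card)
  refine ⟨i, insert (Fin.last (q ^ 3)) (T.image (fun p => Fin.castSucc (e p))), ?_, Finset.mem_insert_self _ _, ?_⟩
  · have hinj : Function.Injective (fun p : ZMod q × ZMod q × ZMod q => Fin.castSucc (e p)) :=
      fun a b hab => e.injective (Fin.castSucc_injective _ hab)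
    rw [Finset.card_insert_of_notMem, Finset.card_image_of_injective _ hinj, hTcard]
    · omega
    · intro hmem
      obtain ⟨p, -, hp⟩ := Finset.mem_image.mp hmem
      exact absurd hp (Fin.castSucc_lt_last (e p)).ne
  · intro x hx y hy hxy
    rcases Finset.mem_insert.mp hx with rfl | hx'
    · rcases Finset.mem_insert.mp hy with rfl | hy'
      · exact absurd rfl hxy
      · obtain ⟨p, hp, rfl⟩ := Finset.mem_image.mp hy'
        rw [Sym2.eq_swap]
        exact hT₀f p (hTsub hp)
    · obtain ⟨p, hp, rfl⟩ := Finset.mem_image.mp hx'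
      rcases Finset.mem_insert.mp hy with rfl | hy'
      · exact hT₀f p (hTsub hp)
      · obtain ⟨p', hp', rfl⟩ := Finset.mem_image.mp hy'
        have hpne : p ≠ p' := fun hpp => hxy (by rw [hpp])
        rw [hext (e p) (e p')]
        show col (e.symm (e p)) (e.symm (e p')) = i
        rw [Equiv.symm_apply_apply, Equiv.symm_apply_apply]
        exact hT₀col p (hTsub hp) p' (hTsub hp') hpne

theorem stmt12 (k r : ℕ) (hk : 2 ≤ k) (hr : 3 ≤ r) :
    ssat r k ≤ 8 * k ^ 3 * r ^ 3 := by
  obtain ⟨q, hq, hq1, hq2⟩ := Nat.exists_prime_lt_and_le_two_mul (k * r) (by positivity)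
  have hcore := core_ssat k r q hk (by omega) hq (le_of_lt hq1)
  obtain ⟨c, hc⟩ := hcore
  have hmem : q ^ 3 ∈ {n | ∃ c : Sym2 (Fin n) → Fin r, Semisaturated r k n c} :=
    ⟨c, fun c' hext => hc c' hext⟩
  calc ssat r k ≤ q ^ 3 := Nat.sInf_le hmem
    _ ≤ (2 * (k * r)) ^ 3 := Nat.pow_le_pow_left hq2 3
    _ = 8 * k ^ 3 * r ^ 3 := by ring
end

section
/- For every k ≥ 3 and r ≥ 2, ssat_r(K_k) ≤ P_r(k-1), where P_r(k-1) is the least n admitting a K_k-free color pattern G_1,…,G_r on an n-vertex set V such that every r-coloring of V contains a strongly monochromatic K_{k-1}. -/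
/-- `Ppat r k` is the least `n` admitting a `K_k`-free color pattern `G_1, …, G_r` on `n`
vertices such that every `r`-coloring of the vertices contains a strongly monochromatic
`K_{k-1}`. -/
noncomputable def Ppat (r k : ℕ) : ℕ :=
  sInf {n | ∃ G : Fin r → SimpleGraph (Fin n),
    (∀ i, (G i).CliqueFree k) ∧
    (∀ i j : Fin r, i ≠ j → ∀ x y : Fin n, ¬((G i).Adj x y ∧ (G j).Adj x y)) ∧
    (∀ χ : Fin n → Fin r, ∃ i : Fin r, ∃ S : Finset (Fin n),
      (G i).IsNClique (k - 1) S ∧ ∀ v ∈ S, χ v = i)}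

/-! Encode a vertex as the list of colors read along a path from the root of the
`r`-ary tree, join `u` to every descendant of `u ++ [a]` in color `a`, and keep only the
lists that contain every letter at most `k - 2` times. A clique of color `a` is a chain of
prefixes on which the number of `a`s strictly increases, so it has at most `k - 1` vertices.
Given a vertex coloring `χ`, walk down from the root, always continuing with the letter
`χ u`; the walk is stuck exactly when `u` already contains `k - 2` letters `a = χ u`, and
then the vertices where the walk turned along `a`, together with `u`, form a strongly
monochromatic `K_{k-1}`. Finally, color the edges of `K_n` by such a pattern; in a
one-vertex extension the colors of the new edges form a vertex coloring, whose strongly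
monochromatic `K_{k-1}` together with the new vertex is a monochromatic `K_k`. -/

open Finset SimpleGraph

section Pattern

variable {ι V W : Type*}

/-- The patterns counted by `Ppat`, over arbitrary vertex and color types. -/
def IsForcingPattern (k : ℕ) (G : ι → SimpleGraph V) : Prop :=
  (∀ i, (G i).CliqueFree k) ∧
  (∀ i j, i ≠ j → ∀ x y, ¬((G i).Adj x y ∧ (G j).Adj x y)) ∧
  ∀ χ : V → ι, ∃ i, ∃ S : Finset V, (G i).IsNClique (k - 1) S ∧ ∀ v ∈ S, χ v = i

theorem IsForcingPattern.comap {k : ℕ} {G : ι → SimpleGraph V} (hG : IsForcingPattern k G)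
    (e : W ≃ V) : IsForcingPattern k fun i => (G i).comap e.toEmbedding := by
  obtain ⟨hfree, hdisj, hforce⟩ := hG
  refine ⟨fun i => (hfree i).comap (Embedding.comap e.toEmbedding (G i)).isContained,
    fun i j hij x y => hdisj i j hij (e x) (e y), fun χ => ?_⟩
  obtain ⟨i, S, hS, hχ⟩ := hforce (χ ∘ e.symm)
  refine ⟨i, S.map e.symm.toEmbedding, (map_symm (G i) e ▸ hS.map :), fun v hv => ?_⟩
  simpa using hχ (e v) (by simpa using hv)

theorem exists_coloring_of_pairwise_disjoint [Nonempty ι] {G : ι → SimpleGraph V}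
    (hG : ∀ i j, i ≠ j → ∀ x y, ¬((G i).Adj x y ∧ (G j).Adj x y)) :
    ∃ c : Sym2 V → ι, ∀ i x y, (G i).Adj x y → c s(x, y) = i := by
  classical
  refine ⟨fun e => if h : ∃ i, e ∈ (G i).edgeSet then h.choose else Classical.arbitrary ι,
    fun i x y hxy => ?_⟩
  have h : ∃ j, s(x, y) ∈ (G j).edgeSet := ⟨i, hxy⟩
  simp only [dif_pos h]
  by_contra hne
  exact hG _ _ hne x y ⟨h.choose_spec, hxy⟩

end Pattern

section Semisaturation

variable {n r : ℕ}

theorem IsMonoOn.insert {c : Sym2 (Fin n) → Fin r} {i : Fin r} {T : Finset (Fin n)}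
    {a : Fin n} (hT : IsMonoOn c i T) (ha : ∀ x ∈ T, c s(a, x) = i) :
    IsMonoOn c i (insert a T) := by
  intro x hx y hy hxy
  rcases mem_insert.1 hx with rfl | hxT <;> rcases mem_insert.1 hy with rfl | hyT
  · exact absurd rfl hxy
  · exact ha y hyT
  · rw [Sym2.eq_swap]
    exact ha x hxT
  · exact hT x hxT y hyT hxy

theorem IsMonoOn.map_castSucc {c : Sym2 (Fin n) → Fin r} {c' : Sym2 (Fin (n + 1)) → Fin r}
    {i : Fin r} {S : Finset (Fin n)} (hext : ColExtends c c') (hS : IsMonoOn c i S) :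
    IsMonoOn c' i (S.map Fin.castSuccEmb) := by
  simp only [IsMonoOn, mem_map, Fin.coe_castSuccEmb]
  rintro _ ⟨x, hx, rfl⟩ _ ⟨y, hy, rfl⟩ hxy
  rw [hext]
  exact hS x hx y hy fun h => hxy (h ▸ rfl)

theorem IsForcingPattern.exists_semisaturated {k : ℕ} {G : Fin r → SimpleGraph (Fin n)}
    (hG : IsForcingPattern k G) (hk : 1 ≤ k) (hr : 0 < r) :
    ∃ c, Semisaturated r k n c := by
  have : Nonempty (Fin r) := ⟨⟨0, hr⟩⟩
  obtain ⟨c, hc⟩ := exists_coloring_of_pairwise_disjoint hG.2.1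
  refine ⟨c, fun c' hext => ?_⟩
  obtain ⟨i, S, hS, hχ⟩ := hG.2.2 fun x => c' s(Fin.last n, x.castSucc)
  have hlast : Fin.last n ∉ S.map Fin.castSuccEmb := by
    simp [Fin.castSucc_ne_last]
  refine ⟨i, insert (Fin.last n) (S.map Fin.castSuccEmb), ?_, mem_insert_self _ _, ?_⟩
  · rw [card_insert_of_notMem hlast, card_map, hS.card_eq]
    omega
  · refine (IsMonoOn.map_castSucc hext fun x hx y hy hxy => ?_).insert (by simpa using hχ)
    exact hc i x y (hS.isClique hx hy hxy)

end Semisaturation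

theorem List.length_lt_of_append_singleton_prefix {α : Type*} {u w : List α} {a : α}
    (h : u ++ [a] <+: w) : u.length < w.length := by
  simpa using h.length_le

theorem List.count_lt_of_append_singleton_prefix {α : Type*} [DecidableEq α] {u w : List α}
    {a : α} (h : u ++ [a] <+: w) : u.count a < w.count a := by
  simpa using h.count_le a

theorem List.length_le_card_mul_of_count_le {α : Type*} [DecidableEq α] [Fintype α] {B : ℕ}
    {l : List α} (h : ∀ a, l.count a ≤ B) : l.length ≤ Fintype.card α * B :=
  calc l.length = ∑ a, l.count a := by
        simpa using (Multiset.sum_count_eq_card (s := univ) (m := (l : Multiset α))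
          fun a _ => mem_univ a).symm
    _ ≤ ∑ _a : α, B := Finset.sum_le_sum fun a _ => h a
    _ = Fintype.card α * B := by simp

section BranchPattern

variable {α : Type*} [DecidableEq α] {B : ℕ}

variable (α B) in
abbrev CountBoundedList : Type _ := {l : List α // ∀ a, l.count a ≤ B}

instance [Fintype α] : Finite (CountBoundedList α B) :=
  ((List.finite_length_le α (Fintype.card α * B)).subset
    fun _ => List.length_le_card_mul_of_count_le).to_subtype

def CountBoundedList.snoc (u : CountBoundedList α B) (a : α) (h : u.1.count a < B) :
    CountBoundedList α B :=
  ⟨u.1 ++ [a], fun b => by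
    rw [List.count_append, List.count_singleton]
    split_ifs with hb
    · cases beq_iff_eq.1 hb
      omega
    · simpa using u.2 b⟩

def branchGraph (a : α) : SimpleGraph (CountBoundedList α B) :=
  fromRel fun u w => u.1 ++ [a] <+: w.1

theorem branchGraph_adj_of_prefix {a : α} {u w : CountBoundedList α B}
    (h : u.1 ++ [a] <+: w.1) : (branchGraph a).Adj u w :=
  (fromRel_adj _ _ _).2
    ⟨fun huw => (List.length_lt_of_append_singleton_prefix h).ne (huw ▸ rfl), Or.inl h⟩

theorem branchGraph_cliqueFree (a : α) : (branchGraph (B := B) a).CliqueFree (B + 2) := by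
  intro S hS
  have hinj : Set.InjOn (fun u : CountBoundedList α B => u.1.count a) S := by
    intro x hx y hy hxy
    by_contra hne
    rcases ((fromRel_adj _ _ _).1 (hS.isClique hx hy hne)).2 with h | h
    · exact (List.count_lt_of_append_singleton_prefix h).ne hxy
    · exact (List.count_lt_of_append_singleton_prefix h).ne' hxy
  have hcard := card_le_card_of_injOn _
    (fun u _ => mem_range.2 (Nat.lt_succ_of_le (u.2 a))) hinj
  rw [hS.card_eq, card_range] at hcard
  omega

theorem branchGraph_adj_disjoint {a b : α} (hab : a ≠ b) (u w : CountBoundedList α B) :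
    ¬((branchGraph a).Adj u w ∧ (branchGraph b).Adj u w) := by
  have key : ∀ {x y : List α}, x ++ [a] <+: y → x ++ [b] <+: y → False := fun ha hb =>
    hab <| by simpa using (List.prefix_of_prefix_length_le ha hb (by simp)).eq_of_length
  rintro ⟨ha, hb⟩
  rcases ((fromRel_adj _ _ _).1 ha).2 with ha | ha <;>
    rcases ((fromRel_adj _ _ _).1 hb).2 with hb | hb
  · exact key ha hb
  · exact lt_asymm (List.length_lt_of_append_singleton_prefix ha)
      (List.length_lt_of_append_singleton_prefix hb)
  · exact lt_asymm (List.length_lt_of_append_singleton_prefix ha)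
      (List.length_lt_of_append_singleton_prefix hb)
  · exact key ha hb

/-- The vertices `p` are nested prefixes of `u`, so the `a` after the shorter one is read on
the way to the longer one. -/
theorem branchGraph_isClique_insert {a : α} {u : CountBoundedList α B}
    {C : Finset (CountBoundedList α B)} (hC : ∀ p ∈ C, p.1 ++ [a] <+: u.1) :
    (branchGraph a).IsClique (↑(insert u C) : Set (CountBoundedList α B)) := by
  rw [coe_insert]
  refine IsClique.insert (fun p hp q hq hpq => ?_) fun p hp _ =>
    (branchGraph_adj_of_prefix (hC p hp)).symm
  have hpu := (List.prefix_append _ _).trans (hC p hp)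
  have hqu := (List.prefix_append _ _).trans (hC q hq)
  rcases lt_trichotomy p.1.length q.1.length with hlt | heq | hgt
  · exact branchGraph_adj_of_prefix
      (List.prefix_of_prefix_length_le (hC p hp) hqu (by simpa using hlt))
  · exact absurd (Subtype.ext
      ((List.prefix_of_prefix_length_le hpu hqu heq.le).eq_of_length heq)) hpq
  · exact (branchGraph_adj_of_prefix
      (List.prefix_of_prefix_length_le (hC q hq) hpu (by simpa using hgt))).symm

/-- The vertices at which a walk from the root to `u` that always continues with the current
vertex's color continued with `a`. -/
def IsColoredAncestors (χ : CountBoundedList α B → α) (a : α) (u : CountBoundedList α B)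
    (C : Finset (CountBoundedList α B)) : Prop :=
  C.card = u.1.count a ∧ ∀ p ∈ C, χ p = a ∧ p.1 ++ [a] <+: u.1

variable {χ : CountBoundedList α B → α} {u : CountBoundedList α B}

theorem IsColoredAncestors.self_notMem {a : α} {C : Finset (CountBoundedList α B)}
    (hC : IsColoredAncestors χ a u C) : u ∉ C :=
  fun hu => (List.length_lt_of_append_singleton_prefix (hC.2 u hu).2).false

theorem IsColoredAncestors.snoc (h : u.1.count (χ u) < B)
    (hu : ∀ a, ∃ C, IsColoredAncestors χ a u C) (a : α) :
    ∃ C, IsColoredAncestors χ a (u.snoc (χ u) h) C := by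
  obtain ⟨C, hC⟩ := hu a
  have hprefix : u.1 <+: (u.snoc (χ u) h).1 := List.prefix_append _ _
  by_cases ha : a = χ u
  · subst ha
    refine ⟨insert u C, ?_, fun p hp => ?_⟩
    · rw [card_insert_of_notMem hC.self_notMem, hC.1]
      simp [CountBoundedList.snoc]
    · rcases mem_insert.1 hp with rfl | hp
      · exact ⟨rfl, List.prefix_rfl⟩
      · exact ⟨(hC.2 p hp).1, (hC.2 p hp).2.trans hprefix⟩
  · refine ⟨C, ?_, fun p hp => ⟨(hC.2 p hp).1, (hC.2 p hp).2.trans hprefix⟩⟩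
    simp [CountBoundedList.snoc, hC.1, Ne.symm ha]

theorem IsColoredAncestors.exists_isNClique {C : Finset (CountBoundedList α B)}
    (hC : IsColoredAncestors χ (χ u) u C) (hu : u.1.count (χ u) = B) :
    ∃ a, ∃ S : Finset (CountBoundedList α B),
      (branchGraph a).IsNClique (B + 1) S ∧ ∀ v ∈ S, χ v = a := by
  refine ⟨χ u, insert u C, ⟨branchGraph_isClique_insert fun p hp => (hC.2 p hp).2, ?_⟩,
    fun v hv => ?_⟩
  · rw [card_insert_of_notMem hC.self_notMem, hC.1, hu]
  · rcases mem_insert.1 hv with rfl | hv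
    · rfl
    · exact (hC.2 v hv).1

theorem exists_isNClique_of_isColoredAncestors [Fintype α] (χ : CountBoundedList α B → α)
    (u : CountBoundedList α B) (hu : ∀ a, ∃ C, IsColoredAncestors χ a u C) :
    ∃ a, ∃ S : Finset (CountBoundedList α B),
      (branchGraph a).IsNClique (B + 1) S ∧ ∀ v ∈ S, χ v = a := by
  by_cases h : u.1.count (χ u) < B
  · exact exists_isNClique_of_isColoredAncestors χ (u.snoc (χ u) h)
      (IsColoredAncestors.snoc h hu)
  · obtain ⟨C, hC⟩ := hu (χ u)
    exact hC.exists_isNClique (le_antisymm (u.2 _) (not_lt.1 h))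
termination_by Fintype.card α * B - u.1.length
decreasing_by
  have := List.length_le_card_mul_of_count_le (u.snoc (χ u) h).2
  simp only [CountBoundedList.snoc, List.length_append, List.length_singleton] at this ⊢
  omega

theorem isForcingPattern_branchGraph [Fintype α] :
    IsForcingPattern (B + 2) (branchGraph (α := α) (B := B)) :=
  ⟨branchGraph_cliqueFree, fun _ _ hab => branchGraph_adj_disjoint hab,
    fun χ => exists_isNClique_of_isColoredAncestors χ ⟨[], by simp⟩
      fun _ => ⟨∅, by simp [IsColoredAncestors]⟩⟩

end BranchPattern

theorem stmt19 (k r : ℕ) (hk : 3 ≤ k) (hr : 2 ≤ r) : ssat r k ≤ Ppat r k := by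
  obtain ⟨B, rfl⟩ : ∃ B, k = B + 2 := ⟨k - 2, by omega⟩
  have hne : {n | ∃ G : Fin r → SimpleGraph (Fin n), IsForcingPattern (B + 2) G}.Nonempty :=
    ⟨_, _, isForcingPattern_branchGraph.comap (Finite.equivFin (CountBoundedList (Fin r) B)).symm⟩
  obtain ⟨G, hG⟩ := Nat.sInf_mem hne
  obtain ⟨c, hc⟩ := hG.exists_semisaturated (by omega) (by omega)
  exact Nat.sInf_le ⟨c, hc⟩
end
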